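/- arXiv:2112.13454 — 6 statements merged into one kernel-verified Lean document; each statement's English description precedes it below -/
import Mathlib

section
/- Let (u, ω, k) be a classical solution of the one-dimensional Kolmogorov two-equation model on [0,T] with k(t,x) ≥ 0 for all (t,x) ∈ [0,T]×ℝ. If ω(0,x) ≤ ω* for all x ∈ ℝ, where ω* > 0, then for every (t,x) ∈ [0,T]×ℝ one has ω(t,x) ≤ ω*/(ω* α₂ t + 1). -/
open MeasureTheory Real Set Filter Topology

noncomputable def pdt (f : ℝ → ℝ → ℝ) (t x : ℝ) : ℝ := deriv (fun s => f s x) t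
noncomputable def pdx (f : ℝ → ℝ → ℝ) (t x : ℝ) : ℝ := deriv (fun y => f t y) x

/-- A classical solution of the 1-D Kolmogorov two-equation model of turbulence on `[0,T]`:
smooth, `2π`-periodic in space, `ω > 0`, satisfying the three equations pointwise. -/
def IsKolmogorovSolution (ν α₁ α₂ α₃ α₄ T : ℝ) (u ω k : ℝ → ℝ → ℝ) : Prop :=
  ContDiff ℝ (⊤ : ℕ∞) (Function.uncurry u) ∧ ContDiff ℝ (⊤ : ℕ∞) (Function.uncurry ω) ∧
    ContDiff ℝ (⊤ : ℕ∞) (Function.uncurry k) ∧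
    (∀ t, Function.Periodic (u t) (2 * π)) ∧
    (∀ t, Function.Periodic (ω t) (2 * π)) ∧
    (∀ t, Function.Periodic (k t) (2 * π)) ∧
    (∀ t x, 0 < ω t x) ∧
    (∀ t ∈ Icc (0 : ℝ) T, ∀ x : ℝ,
      pdt u t x + u t x * pdx u t x
        - ν * deriv (fun y => k t y / ω t y * pdx u t y) x = 0) ∧
    (∀ t ∈ Icc (0 : ℝ) T, ∀ x : ℝ,
      pdt ω t x + u t x * pdx ω t x
        - α₁ * deriv (fun y => k t y / ω t y * pdx ω t y) x = -α₂ * (ω t x) ^ 2) ∧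
    (∀ t ∈ Icc (0 : ℝ) T, ∀ x : ℝ,
      pdt k t x + u t x * pdx k t x
        - α₃ * deriv (fun y => k t y / ω t y * pdx k t y) x
        = -(k t x) * ω t x + α₄ * (k t x / ω t x) * (pdx u t x) ^ 2)

/-- Second derivative test: at a global maximum of a smooth function the second
derivative is nonpositive. -/
lemma second_deriv_nonpos_of_max {h : ℝ → ℝ} (hh : ContDiff ℝ (⊤ : ℕ∞) h) {x₀ : ℝ}
    (hmax : ∀ y, h y ≤ h x₀) : deriv (deriv h) x₀ ≤ 0 := by
  by_contra hc
  push_neg at hc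
  have hdh : Differentiable ℝ h := hh.differentiable (by simp)
  have hdh' : Differentiable ℝ (deriv h) :=
    (contDiff_infty_iff_deriv.mp hh).2.differentiable (by simp)
  have h0 : deriv h x₀ = 0 :=
    IsLocalMax.deriv_eq_zero (Filter.Eventually.of_forall hmax)
  have hts : Tendsto (slope (deriv h) x₀) (𝓝[>] x₀) (𝓝 (deriv (deriv h) x₀)) :=
    (hasDerivAt_iff_tendsto_slope.mp (hdh' x₀).hasDerivAt).mono_left
      (nhdsWithin_mono _ (fun y hy => ne_of_gt hy))
  have hev : ∀ᶠ y in 𝓝[>] x₀, 0 < deriv h y := by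
    filter_upwards [hts.eventually_const_lt hc, self_mem_nhdsWithin] with y hy hy'
    rw [slope_def_field, h0, sub_zero] at hy
    have hy0 : (0:ℝ) < y - x₀ := sub_pos.mpr hy'
    by_contra hle
    push_neg at hle
    rcases div_pos_iff.mp hy with ⟨h1, _⟩ | ⟨_, h2⟩
    · linarith
    · linarith
  obtain ⟨U, hU, hsub⟩ := mem_nhdsGT_iff_exists_Ioo_subset.mp hev
  have hUx : x₀ < U := hU
  set m := (x₀ + U) / 2 with hm_def
  have hm1 : x₀ < m := by simp only [hm_def]; linarith
  have hm2 : m < U := by simp only [hm_def]; linarith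
  have hmono : StrictMonoOn h (Icc x₀ m) := by
    apply strictMonoOn_of_deriv_pos (convex_Icc _ _) hdh.continuous.continuousOn
    intro y hy
    rw [interior_Icc] at hy
    exact hsub ⟨hy.1, lt_trans hy.2 hm2⟩
  have : h x₀ < h m :=
    hmono (left_mem_Icc.mpr hm1.le) (right_mem_Icc.mpr hm1.le) hm1
  exact absurd (hmax m) (not_le.mpr this)

set_option maxHeartbeats 1600000 in
theorem omega_upper_bound
    (ν α₁ α₂ α₃ α₄ T : ℝ) (hν : 0 < ν) (hα₁ : 0 < α₁) (hα₂ : 0 < α₂)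
    (hα₃ : 0 < α₃) (hα₄ : 0 < α₄) (hT : 0 < T)
    (u ω k : ℝ → ℝ → ℝ)
    (hsol : IsKolmogorovSolution ν α₁ α₂ α₃ α₄ T u ω k)
    (hk : ∀ t ∈ Icc (0 : ℝ) T, ∀ x : ℝ, 0 ≤ k t x)
    (ωstar : ℝ) (hωstar : 0 < ωstar)
    (hω0 : ∀ x : ℝ, ω 0 x ≤ ωstar) :
    ∀ t ∈ Icc (0 : ℝ) T, ∀ x : ℝ, ω t x ≤ ωstar / (ωstar * α₂ * t + 1) := by
  obtain ⟨hu_cd, hω_cd, hk_cd, hu_per, hω_per, hk_per, hω_pos, hequ, heqω, heqk⟩ := hsol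
  have h2π : (0:ℝ) < 2 * π := by positivity
  have hωc : Continuous (Function.uncurry ω) := hω_cd.continuous
  have hslice : ∀ t, ContDiff ℝ (⊤ : ℕ∞) (fun y => ω t y) := fun t =>
    hω_cd.comp (contDiff_const.prodMk contDiff_id)
  have hkslice : ∀ t, ContDiff ℝ (⊤ : ℕ∞) (fun y => k t y) := fun t =>
    hk_cd.comp (contDiff_const.prodMk contDiff_id)
  have htslice : ∀ x, Differentiable ℝ (fun s => ω s x) := fun x =>
    (hω_cd.comp (contDiff_id.prodMk contDiff_const)).differentiable (by simp)
  -- main claim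
  have key : ∀ ε > (0:ℝ), ∀ t ∈ Icc (0:ℝ) T, ∀ x ∈ Icc (-π) π,
      ω t x * (ωstar * α₂ * t + 1) < ωstar + ε := by
    intro ε hε
    by_contra hcon
    push_neg at hcon
    obtain ⟨t₁, ht₁, x₁, hx₁, hge⟩ := hcon
    set A : Set (ℝ × ℝ) := (Icc (0:ℝ) T ×ˢ Icc (-π) π) ∩
      {p : ℝ × ℝ | ωstar + ε ≤ ω p.1 p.2 * (ωstar * α₂ * p.1 + 1)} with hA_def
    have hAne : A.Nonempty := ⟨(t₁, x₁), ⟨⟨ht₁, hx₁⟩, hge⟩⟩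
    have hcont : Continuous fun p : ℝ × ℝ => ω p.1 p.2 * (ωstar * α₂ * p.1 + 1) := by
      have h1 : Continuous fun p : ℝ × ℝ => ω p.1 p.2 := hωc
      exact h1.mul (by continuity)
    have hAcomp : IsCompact A :=
      (isCompact_Icc.prod isCompact_Icc).inter_right
        (isClosed_le continuous_const hcont)
    obtain ⟨⟨t₀, x₁'⟩, hmemA, hmin⟩ :=
      hAcomp.exists_isMinOn hAne continuous_fst.continuousOn
    obtain ⟨⟨ht₀I, hx₁I⟩, hineq⟩ := hmemA
    simp only [Set.mem_setOf_eq] at hineq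
    replace ht₀I : t₀ ∈ Icc (0:ℝ) T := ht₀I
    replace hx₁I : x₁' ∈ Icc (-π) π := hx₁I
    have hD₀ : (0:ℝ) < ωstar * α₂ * t₀ + 1 := by nlinarith [mul_nonneg (mul_nonneg hωstar.le hα₂.le) ht₀I.1]
    have ht₀pos : 0 < t₀ := by
      rcases ht₀I.1.lt_or_eq with h | h
      · exact h
      · exfalso
        rw [← h] at hineq
        simp only [mul_zero, zero_mul, zero_add, mul_one] at hineq
        have := hω0 x₁'
        linarith
    -- strict inequality before t₀, for all x
    have hbefore : ∀ s, 0 ≤ s → s < t₀ → ∀ y,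
        ω s y * (ωstar * α₂ * s + 1) < ωstar + ε := by
      intro s hs0 hst y
      by_contra hcy
      push_neg at hcy
      obtain ⟨z, hz, hzy⟩ := (hω_per s).exists_mem_Ico h2π y (-π)
      have hsz : (s, z) ∈ A := by
        refine ⟨⟨⟨hs0, hst.le.trans ht₀I.2⟩, ⟨hz.1, by linarith [hz.2]⟩⟩, ?_⟩
        simp only [Set.mem_setOf_eq]
        rw [← hzy]
        exact hcy
      exact absurd (hmin hsz) (not_le.mpr hst)
    -- spatial argmax at time t₀
    obtain ⟨x₀, hx₀I, hx₀max⟩ := (isCompact_Icc : IsCompact (Icc (-π) π)).exists_isMaxOn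
      (nonempty_Icc.mpr (by linarith [pi_pos])) (hslice t₀).continuous.continuousOn
    have hglob : ∀ y, ω t₀ y ≤ ω t₀ x₀ := by
      intro y
      obtain ⟨z, hz, hzy⟩ := (hω_per t₀).exists_mem_Ico h2π y (-π)
      rw [hzy]
      exact hx₀max ⟨hz.1, by linarith [hz.2]⟩
    have hω₀pos : 0 < ω t₀ x₀ := hω_pos t₀ x₀
    have hω₀B : ωstar + ε ≤ ω t₀ x₀ * (ωstar * α₂ * t₀ + 1) := by
      exact le_trans hineq (mul_le_mul_of_nonneg_right (hglob x₁') hD₀.le)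
    -- spatial derivative facts
    have hh0 : deriv (fun y => ω t₀ y) x₀ = 0 :=
      IsLocalMax.deriv_eq_zero (Filter.Eventually.of_forall hglob)
    have hh2 : deriv (deriv (fun y => ω t₀ y)) x₀ ≤ 0 :=
      second_deriv_nonpos_of_max (hslice t₀) hglob
    have hpdx : pdx ω t₀ x₀ = 0 := by simp only [pdx]; exact hh0
    have hadiff : DifferentiableAt ℝ (fun y => k t₀ y / ω t₀ y) x₀ :=
      (((hkslice t₀).differentiable (by simp)) x₀).div
        (((hslice t₀).differentiable (by simp)) x₀) (ne_of_gt hω₀pos)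
    have hd'diff : DifferentiableAt ℝ (deriv (fun y => ω t₀ y)) x₀ :=
      ((contDiff_infty_iff_deriv.mp (hslice t₀)).2.differentiable (by simp)) x₀
    have hprod : HasDerivAt (fun y => k t₀ y / ω t₀ y * deriv (fun y' => ω t₀ y') y)
        (deriv (fun y => k t₀ y / ω t₀ y) x₀ * deriv (fun y' => ω t₀ y') x₀ +
          (k t₀ x₀ / ω t₀ x₀) * deriv (deriv (fun y' => ω t₀ y')) x₀) x₀ :=
      hadiff.hasDerivAt.mul hd'diff.hasDerivAt
    have hdiffterm : deriv (fun y => k t₀ y / ω t₀ y * pdx ω t₀ y) x₀ ≤ 0 := by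
      have heq : (fun y => k t₀ y / ω t₀ y * pdx ω t₀ y)
          = fun y => k t₀ y / ω t₀ y * deriv (fun y' => ω t₀ y') y := by
        funext y; simp only [pdx]
      rw [heq, hprod.deriv, hh0, mul_zero, zero_add]
      have hknn : 0 ≤ k t₀ x₀ / ω t₀ x₀ := div_nonneg (hk t₀ ht₀I x₀) hω₀pos.le
      exact mul_nonpos_of_nonneg_of_nonpos hknn hh2
    -- PDE at (t₀, x₀)
    have hPDE := heqω t₀ ht₀I x₀
    rw [hpdx, mul_zero, add_zero] at hPDE
    have hpdt_le : pdt ω t₀ x₀ ≤ -α₂ * (ω t₀ x₀) ^ 2 := by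
      have h1 : α₁ * deriv (fun y => k t₀ y / ω t₀ y * pdx ω t₀ y) x₀ ≤ 0 :=
        mul_nonpos_of_nonneg_of_nonpos hα₁.le hdiffterm
      linarith
    -- time derivative lower bound
    have hf : HasDerivAt (fun s => ω s x₀) (pdt ω t₀ x₀) t₀ := by
      simp only [pdt]; exact (htslice x₀ t₀).hasDerivAt
    set G : ℝ → ℝ := fun s => ω s x₀ * (ωstar * α₂ * s + 1) - (ωstar + ε) with hG_def
    have hGd : HasDerivAt G
        (pdt ω t₀ x₀ * (ωstar * α₂ * t₀ + 1) + ω t₀ x₀ * (ωstar * α₂)) t₀ := by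
      have h1 : HasDerivAt (fun s : ℝ => ωstar * α₂ * s + 1) (ωstar * α₂) t₀ := by
        simpa using ((hasDerivAt_id t₀).const_mul (ωstar * α₂)).add_const 1
      exact (hf.mul h1).sub_const _
    have hGneg : ∀ s, 0 ≤ s → s < t₀ → G s < 0 := by
      intro s h1 h2
      have := hbefore s h1 h2 x₀
      simp only [hG_def]
      linarith
    have hG0 : 0 ≤ G t₀ := by simp only [hG_def]; linarith
    have hGder : 0 ≤ pdt ω t₀ x₀ * (ωstar * α₂ * t₀ + 1) + ω t₀ x₀ * (ωstar * α₂) := by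
      have hts : Tendsto (slope G t₀) (𝓝[<] t₀)
          (𝓝 (pdt ω t₀ x₀ * (ωstar * α₂ * t₀ + 1) + ω t₀ x₀ * (ωstar * α₂))) :=
        (hasDerivAt_iff_tendsto_slope.mp hGd).mono_left
          (nhdsWithin_mono _ (fun y hy => ne_of_lt hy))
      refine ge_of_tendsto hts ?_
      filter_upwards [Ioo_mem_nhdsLT_of_mem (⟨ht₀pos, le_refl t₀⟩ : t₀ ∈ Ioc 0 t₀)]
        with s hs
      rw [slope_def_field]
      have hGs : G s < 0 := hGneg s hs.1.le hs.2
      have : G s - G t₀ < 0 := by linarith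
      exact (div_pos_of_neg_of_neg this (by linarith [hs.2])).le
    -- contradiction
    have hm1 := mul_le_mul_of_nonneg_right hpdt_le hD₀.le
    have hm2 := mul_le_mul_of_nonneg_left hω₀B hω₀pos.le
    nlinarith [mul_pos (mul_pos hα₂ hω₀pos) hε]
  -- conclude
  intro t ht x
  have hD : (0:ℝ) < ωstar * α₂ * t + 1 := by nlinarith [mul_nonneg (mul_nonneg hωstar.le hα₂.le) ht.1]
  have hle : ω t x * (ωstar * α₂ * t + 1) ≤ ωstar := by
    by_contra hcon
    push_neg at hcon
    obtain ⟨z, hz, hzx⟩ := (hω_per t).exists_mem_Ico h2π x (-π)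
    have := key (ω t x * (ωstar * α₂ * t + 1) - ωstar) (by linarith) t ht z
      ⟨hz.1, by linarith [hz.2]⟩
    rw [← hzx] at this
    linarith
  rw [le_div_iff₀ hD]
  exact hle
end

section
/- Let (u, ω, k) be a classical solution of the one-dimensional Kolmogorov two-equation model on [0,T] with k(t,x) ≥ 0 for all (t,x) ∈ [0,T]×ℝ. If ω(0,x) ≥ ω_* for all x ∈ ℝ, where ω_* > 0, then for every (t,x) ∈ [0,T]×ℝ one has ω(t,x) ≥ ω_*/(ω_* α₂ t + 1) > 0. -/
open MeasureTheory Real Set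

/-- The supremum of `|f|` over one period `Ω = [-π, π]`. -/
noncomputable def supNorm (f : ℝ → ℝ) : ℝ := sSup ((fun x => |f x|) '' Icc (-π) π)

open Filter Topology

private lemma slice_x' {f : ℝ → ℝ → ℝ} (hf : ContDiff ℝ (⊤:ℕ∞) (Function.uncurry f)) (t : ℝ) :
    ContDiff ℝ (⊤:ℕ∞) (fun x => f t x) :=
  hf.comp (contDiff_const.prodMk contDiff_id)

private lemma slice_t' {f : ℝ → ℝ → ℝ} (hf : ContDiff ℝ (⊤:ℕ∞) (Function.uncurry f)) (x : ℝ) :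
    ContDiff ℝ (⊤:ℕ∞) (fun t => f t x) :=
  hf.comp (contDiff_id.prodMk contDiff_const)

/-- if `g` has positive derivative at `a` and `g a = 0` then `g < 0` just left of `a`. -/
private lemma eventually_neg_left {g : ℝ → ℝ} {a L : ℝ} (hg : HasDerivAt g L a) (hL : 0 < L)
    (hga : g a = 0) : ∀ᶠ t in 𝓝[<] a, g t < 0 := by
  have hs := hasDerivAt_iff_tendsto_slope.mp hg
  have h1 : ∀ᶠ t in 𝓝[≠] a, 0 < slope g a t := hs.eventually (eventually_gt_nhds hL)
  have h2 : ∀ᶠ t in 𝓝[<] a, 0 < slope g a t :=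
    h1.filter_mono (nhdsWithin_mono a fun t ht => ne_of_lt ht)
  filter_upwards [h2, self_mem_nhdsWithin] with t ht hta
  rw [slope_def_field, hga, sub_zero] at ht
  rcases div_pos_iff.mp ht with ⟨_, h⟩ | ⟨h, _⟩
  · exact absurd h (by simp only [sub_pos]; exact not_lt.mpr hta.le)
  · exact h

private lemma eventually_pos_left {g : ℝ → ℝ} {a L : ℝ} (hg : HasDerivAt g L a) (hL : L < 0)
    (hga : g a = 0) : ∀ᶠ t in 𝓝[<] a, 0 < g t := by
  have := eventually_neg_left hg.neg (by linarith : (0:ℝ) < -L) (by simp [hga])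
  filter_upwards [this] with t ht
  simpa using ht

/-- second derivative is nonneg at a local minimum of a smooth function -/
private lemma second_deriv_nonneg {f : ℝ → ℝ} (hf : ContDiff ℝ (⊤:ℕ∞) f) {a : ℝ}
    (h : IsLocalMin f a) : 0 ≤ deriv (deriv f) a := by
  by_contra hneg
  push_neg at hneg
  have hf' : ContDiff ℝ (⊤:ℕ∞) (deriv f) := by
    have := contDiff_infty_iff_deriv.mp (by exact_mod_cast hf)
    exact_mod_cast this.2
  have hd : HasDerivAt (deriv f) (deriv (deriv f) a) a :=
    ((hf'.differentiable (by simp)) a).hasDerivAt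
  have hposleft : ∀ᶠ t in 𝓝[<] a, 0 < deriv f t :=
    eventually_pos_left hd hneg h.deriv_eq_zero
  have hminleft : ∀ᶠ t in 𝓝[<] a, f a ≤ f t := h.filter_mono nhdsWithin_le_nhds
  obtain ⟨l, hl, hIoo⟩ := mem_nhdsLT_iff_exists_Ioo_subset.mp
    (hposleft.and hminleft)
  set b := (l + a) / 2 with hb
  have hl' : l < a := hl
  have hba : b < a := by simp only [hb]; linarith
  have hlb : l < b := by simp only [hb]; linarith
  have hmono : StrictMonoOn f (Icc b a) := by
    refine strictMonoOn_of_deriv_pos (convex_Icc b a) (hf.continuous.continuousOn) ?_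
    intro t ht
    rw [interior_Icc] at ht
    exact (hIoo ⟨lt_trans hlb ht.1, ht.2⟩).1
  have h1 : f b < f a := hmono ⟨le_refl b, hba.le⟩ ⟨hba.le, le_refl a⟩ hba
  have h2 : f a ≤ f b := (hIoo ⟨hlb, hba⟩).2
  linarith

theorem omega_lower_bound
    (ν α₁ α₂ α₃ α₄ T : ℝ) (hν : 0 < ν) (hα₁ : 0 < α₁) (hα₂ : 0 < α₂)
    (hα₃ : 0 < α₃) (hα₄ : 0 < α₄) (hT : 0 < T)
    (u ω k : ℝ → ℝ → ℝ)
    (hsol : IsKolmogorovSolution ν α₁ α₂ α₃ α₄ T u ω k)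
    (hk : ∀ t ∈ Icc (0 : ℝ) T, ∀ x : ℝ, 0 ≤ k t x)
    (ωlow : ℝ) (hωlow : 0 < ωlow)
    (hω0 : ∀ x : ℝ, ωlow ≤ ω 0 x) :
    ∀ t ∈ Icc (0 : ℝ) T, ∀ x : ℝ,
      ωlow / (ωlow * α₂ * t + 1) ≤ ω t x ∧ 0 < ωlow / (ωlow * α₂ * t + 1) := by
  obtain ⟨huC, hωC, hkC, hpu, hpω, hpk, hωpos, hequ, heqω, heqk⟩ := hsol
  have hπ : (0:ℝ) < π := Real.pi_pos
  have h2π : (0:ℝ) < 2 * π := by linarith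
  have hωcont : Continuous (Function.uncurry ω) := hωC.continuous
  -- key claim: strict lower barrier for every ε > 0
  have key : ∀ ε : ℝ, 0 < ε → ∀ t ∈ Icc (0:ℝ) T, ∀ x : ℝ,
      ωlow / (ωlow * α₂ * t + 1) - ε * (t + 1) < ω t x := by
    intro ε hε
    set den : ℝ → ℝ := fun s => ωlow * α₂ * max s 0 + 1 with hden_def
    have hden_pos : ∀ s, 0 < den s := by
      intro s
      have h1 : 0 ≤ ωlow * α₂ * max s 0 := by positivity
      simp only [hden_def]; linarith
    set ψ : ℝ → ℝ := fun s => ωlow / den s - ε * (s + 1) with hψ_def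
    have hdencont : Continuous den :=
      ((continuous_const.mul (continuous_id.max continuous_const))).add continuous_const
    have hψcont : Continuous ψ :=
      (continuous_const.div hdencont fun s => (hden_pos s).ne').sub
        (continuous_const.mul (continuous_id.add continuous_const))
    have main : ∀ t ∈ Icc (0:ℝ) T, ∀ x ∈ Icc (-π) π, ψ t < ω t x := by
      by_contra hcon
      push_neg at hcon
      obtain ⟨t₁, ht₁, x₁, hx₁, hle⟩ := hcon
      set C : Set (ℝ × ℝ) :=
        (Icc (0:ℝ) T ×ˢ Icc (-π) π) ∩ {p : ℝ × ℝ | ω p.1 p.2 ≤ ψ p.1} with hC_def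
      have hCclosed : IsClosed C :=
        (isClosed_Icc.prod isClosed_Icc).inter
          (isClosed_le hωcont (hψcont.comp continuous_fst))
      have hCcpt : IsCompact C :=
        (isCompact_Icc.prod isCompact_Icc).of_isClosed_subset hCclosed inter_subset_left
      set S : Set ℝ := Prod.fst '' C with hS_def
      have hSmem : ∀ {s : ℝ}, s ∈ S ↔ s ∈ Icc (0:ℝ) T ∧ ∃ y ∈ Icc (-π) π, ω s y ≤ ψ s := by
        intro s
        constructor
        · rintro ⟨⟨s', y⟩, ⟨⟨hs, hy⟩, hle'⟩, rfl⟩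
          exact ⟨hs, y, hy, hle'⟩
        · rintro ⟨hs, y, hy, hle'⟩
          exact ⟨(s, y), ⟨⟨hs, hy⟩, hle'⟩, rfl⟩
      have hSne : S.Nonempty := ⟨t₁, hSmem.mpr ⟨ht₁, x₁, hx₁, hle⟩⟩
      have hScpt : IsCompact S := hCcpt.image continuous_fst
      set t₀ : ℝ := sInf S with ht₀_def
      have ht₀S : t₀ ∈ S := hScpt.sInf_mem hSne
      obtain ⟨ht₀Icc, x₀, hx₀, hx₀le⟩ := hSmem.mp ht₀S
      have hbdd : BddBelow S := hScpt.bddBelow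
      -- before t₀ everything is above the barrier
      have hbefore : ∀ s, 0 ≤ s → s < t₀ → ∀ y ∈ Icc (-π) π, ψ s < ω s y := by
        intro s hs0 hst y hy
        by_contra hcontra
        push_neg at hcontra
        have hsS : s ∈ S := hSmem.mpr ⟨⟨hs0, le_trans hst.le ht₀Icc.2⟩, y, hy, hcontra⟩
        exact absurd (csInf_le hbdd hsS) (not_le.mpr hst)
      -- t₀ is positive
      have ht₀pos : 0 < t₀ := by
        rcases lt_or_eq_of_le ht₀Icc.1 with h | h
        · exact h
        · exfalso
          have hψ0 : ψ 0 = ωlow - ε := by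
            simp [hψ_def, hden_def]
          have h0 := hω0 x₀
          rw [← h] at hx₀le
          rw [hψ0] at hx₀le
          linarith
      -- ω t₀ is above ψ t₀ everywhere on the period
      have hmin : ∀ y ∈ Icc (-π) π, ψ t₀ ≤ ω t₀ y := by
        intro y hy
        by_contra hcontra
        push_neg at hcontra
        have hg : Continuous fun s => ω s y - ψ s :=
          (hωcont.comp (continuous_id.prodMk continuous_const)).sub hψcont
        have hev : ∀ᶠ s in 𝓝 t₀, ω s y - ψ s < 0 :=
          (hg.tendsto t₀).eventually (eventually_lt_nhds (sub_neg.mpr hcontra))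
        have hev' : ∀ᶠ s in 𝓝[<] t₀, ω s y - ψ s < 0 := hev.filter_mono nhdsWithin_le_nhds
        obtain ⟨s, hs1, hs2, hs3⟩ := (hev'.and
          (((eventually_gt_nhds ht₀pos).filter_mono nhdsWithin_le_nhds).and
            eventually_mem_nhdsWithin)).exists
        have := hbefore s hs2.le hs3 y hy
        linarith
      have heq0 : ω t₀ x₀ = ψ t₀ := le_antisymm hx₀le (hmin x₀ hx₀)
      have hωt₀pos := hωpos t₀ x₀
      -- x₀ is a global spatial minimum of ω t₀
      have hglobalmin : ∀ y : ℝ, ω t₀ x₀ ≤ ω t₀ y := by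
        intro y
        obtain ⟨y₀, hy₀, hyeq⟩ := (hpω t₀).exists_mem_Ico h2π y (-π)
        have hy₀' : y₀ ∈ Icc (-π) π := ⟨hy₀.1, by linarith [hy₀.2]⟩
        rw [hyeq, heq0]
        exact hmin y₀ hy₀'
      have hlocmin : IsLocalMin (fun y => ω t₀ y) x₀ :=
        Filter.Eventually.of_forall hglobalmin
      have hωxC : ContDiff ℝ (⊤:ℕ∞) (fun y => ω t₀ y) := slice_x' hωC t₀
      have hderiv0 : deriv (fun y => ω t₀ y) x₀ = 0 := hlocmin.deriv_eq_zero
      have hsecond : 0 ≤ deriv (deriv (fun y => ω t₀ y)) x₀ := second_deriv_nonneg hωxC hlocmin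
      have hωxC' : ContDiff ℝ (⊤:ℕ∞) (deriv (fun y => ω t₀ y)) := by
        have := contDiff_infty_iff_deriv.mp (by exact_mod_cast hωxC)
        exact_mod_cast this.2
      have hcdiff : DifferentiableAt ℝ (fun y => k t₀ y / ω t₀ y) x₀ :=
        (((slice_x' hkC t₀).differentiable (by simp)) x₀).div
          ((hωxC.differentiable (by simp)) x₀) (hωt₀pos.ne')
      have hddiff : DifferentiableAt ℝ (deriv (fun y => ω t₀ y)) x₀ :=
        (hωxC'.differentiable (by simp)) x₀
      -- the diffusion term is nonnegative at (t₀, x₀)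
      have hD : deriv (fun y => k t₀ y / ω t₀ y * pdx ω t₀ y) x₀ =
          k t₀ x₀ / ω t₀ x₀ * deriv (deriv (fun y => ω t₀ y)) x₀ := by
        simp only [pdx]
        rw [deriv_fun_mul hcdiff hddiff, hderiv0]
        ring
      have hDnonneg : 0 ≤ deriv (fun y => k t₀ y / ω t₀ y * pdx ω t₀ y) x₀ := by
        rw [hD]
        exact mul_nonneg (div_nonneg (hk t₀ ht₀Icc x₀) hωt₀pos.le) hsecond
      -- the PDE bounds the time derivative from below
      have hPDE := heqω t₀ ht₀Icc x₀
      have hpdxzero : pdx ω t₀ x₀ = 0 := hderiv0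
      rw [hpdxzero, mul_zero, add_zero] at hPDE
      have hpdt_ge : -α₂ * (ω t₀ x₀)^2 ≤ pdt ω t₀ x₀ := by
        nlinarith [mul_nonneg hα₁.le hDnonneg]
      -- derivative of the barrier at t₀
      have hddpos : 0 < ωlow * α₂ * t₀ + 1 := by
        nlinarith [mul_pos (mul_pos hωlow hα₂) ht₀pos]
      set dψ : ℝ := -(ωlow * (ωlow * α₂)) / (ωlow * α₂ * t₀ + 1)^2 - ε with hdψ
      have hψderiv : HasDerivAt ψ dψ t₀ := by
        have h1 : HasDerivAt (fun s => ωlow * α₂ * s + 1) (ωlow * α₂) t₀ := by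
          simpa using ((hasDerivAt_id t₀).const_mul (ωlow * α₂)).add_const 1
        have h2 : HasDerivAt (fun s => ωlow / (ωlow * α₂ * s + 1))
            ((0 * (ωlow * α₂ * t₀ + 1) - ωlow * (ωlow * α₂)) / (ωlow * α₂ * t₀ + 1)^2) t₀ :=
          (hasDerivAt_const t₀ ωlow).div h1 hddpos.ne'
        have h4 : HasDerivAt (fun s => ε * (s + 1)) ε t₀ := by
          simpa using ((hasDerivAt_id t₀).add_const 1).const_mul ε
        have h3 := h2.sub h4
        have heqf : ψ =ᶠ[𝓝 t₀] fun s => ωlow / (ωlow * α₂ * s + 1) - ε * (s + 1) := by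
          filter_upwards [eventually_gt_nhds ht₀pos] with s hs
          simp [hψ_def, hden_def, max_eq_left hs.le]
        rw [hdψ]
        refine HasDerivAt.congr_of_eventuallyEq ?_ heqf
        convert h3 using 1
        · funext s
          simp only [Pi.sub_apply]
        · ring
      have hωtdiff : HasDerivAt (fun s => ω s x₀) (pdt ω t₀ x₀) t₀ :=
        (((slice_t' hωC x₀).differentiable (by simp)) t₀).hasDerivAt
      have hhd : HasDerivAt (fun s => ω s x₀ - ψ s) (pdt ω t₀ x₀ - dψ) t₀ := hωtdiff.sub hψderiv
      have hle' : pdt ω t₀ x₀ ≤ dψ := by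
        by_contra hgt
        push_neg at hgt
        have hev := eventually_neg_left hhd (by linarith) (by simp [heq0])
        obtain ⟨s, hs1, hs2, hs3⟩ := (hev.and
          (((eventually_gt_nhds ht₀pos).filter_mono nhdsWithin_le_nhds).and
            eventually_mem_nhdsWithin)).exists
        have := hbefore s hs2.le hs3 x₀ hx₀
        linarith
      -- final numeric contradiction : ε ≤ 0
      have hψt₀ : ψ t₀ = ωlow / (ωlow * α₂ * t₀ + 1) - ε * (t₀ + 1) := by
        simp [hψ_def, hden_def, max_eq_left ht₀pos.le]
      set φv : ℝ := ωlow / (ωlow * α₂ * t₀ + 1) with hφv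
      have hφpos : 0 < φv := div_pos hωlow hddpos
      have hA : -α₂ * (ω t₀ x₀)^2 ≤ dψ := le_trans hpdt_ge hle'
      have hkey : dψ = -α₂ * φv^2 - ε := by
        rw [hdψ, hφv]
        field_simp
      rw [hkey] at hA
      have hωle : ω t₀ x₀ ≤ φv := by
        rw [heq0, hψt₀]
        have hm := mul_pos hε (by linarith : (0:ℝ) < t₀ + 1)
        linarith
      have hnn : 0 ≤ α₂ * ((φv - ω t₀ x₀) * (φv + ω t₀ x₀)) :=
        mul_nonneg hα₂.le (mul_nonneg (sub_nonneg.mpr hωle) (by linarith))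
      have hexp : α₂ * ((φv - ω t₀ x₀) * (φv + ω t₀ x₀))
          = α₂ * φv ^ 2 - α₂ * (ω t₀ x₀) ^ 2 := by ring
      linarith
    -- extend to all real x using spatial periodicity
    intro t ht x
    obtain ⟨y, hy, hxy⟩ := (hpω t).exists_mem_Ico h2π x (-π)
    have hy' : y ∈ Icc (-π) π := ⟨hy.1, by linarith [hy.2]⟩
    have hm := main t ht y hy'
    rw [← hxy] at hm
    have hmax : max t 0 = t := max_eq_left ht.1
    simp only [hψ_def, hden_def, hmax] at hm
    exact hm
  -- conclude
  intro t ht x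
  have hden : (0:ℝ) < ωlow * α₂ * t + 1 := by
    nlinarith [mul_nonneg (mul_nonneg hωlow.le hα₂.le) ht.1]
  have hpos : 0 < ωlow / (ωlow * α₂ * t + 1) := div_pos hωlow hden
  refine ⟨?_, hpos⟩
  by_contra hlt
  push_neg at hlt
  have ht1 : (0:ℝ) < t + 1 := by linarith [ht.1]
  have hεpos : 0 < (ωlow / (ωlow * α₂ * t + 1) - ω t x) / (t + 1) :=
    div_pos (by linarith) ht1
  have hk2 := key _ hεpos t ht x
  have heq : ωlow / (ωlow * α₂ * t + 1)
      - (ωlow / (ωlow * α₂ * t + 1) - ω t x) / (t + 1) * (t + 1) = ω t x := by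
    field_simp
    ring
  linarith [hk2, heq.ge]
end

section
/- Let (u, ω, k) be a classical solution of the one-dimensional Kolmogorov two-equation model on [0,T]. Assume that ω(0,x) ≤ ω* for all x, where ω* > 0, and that k(0,x) ≥ k_* for all x, where k_* ≥ 0. Then for every (t,x) ∈ [0,T]×ℝ one has k(t,x) ≥ k_*/(ω* α₂ t + 1)^{1/α₂}. In particular, if k(0,·) ≥ 0 then k(t,x) ≥ 0 for all (t,x) ∈ [0,T]×ℝ. -/
open MeasureTheory Real Set

section Auxiliary

open Function Filter Topology

/-- The partial derivative in the second coordinate, as a function on the plane. -/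
noncomputable def PXd (f : ℝ × ℝ → ℝ) : ℝ × ℝ → ℝ := fun p => fderiv ℝ f p (0, 1)

/-- The partial derivative in the first coordinate, as a function on the plane. -/
noncomputable def PTd (f : ℝ × ℝ → ℝ) : ℝ × ℝ → ℝ := fun p => fderiv ℝ f p (1, 0)

lemma hasDerivAt_snd' {f : ℝ × ℝ → ℝ} (hf : Differentiable ℝ f) (t x : ℝ) :
    HasDerivAt (fun y => f (t, y)) (PXd f (t, x)) x := by
  have h1 : HasDerivAt (fun y : ℝ => ((t, y) : ℝ × ℝ)) (0, 1) x :=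
    (hasDerivAt_const x t).prodMk (hasDerivAt_id x)
  exact (hf (t, x)).hasFDerivAt.comp_hasDerivAt x h1

lemma hasDerivAt_fst' {f : ℝ × ℝ → ℝ} (hf : Differentiable ℝ f) (t x : ℝ) :
    HasDerivAt (fun s => f (s, x)) (PTd f (t, x)) t := by
  have h1 : HasDerivAt (fun s : ℝ => ((s, x) : ℝ × ℝ)) (1, 0) t :=
    (hasDerivAt_id t).prodMk (hasDerivAt_const t x)
  exact (hf (t, x)).hasFDerivAt.comp_hasDerivAt t h1

lemma contDiff_PXd {f : ℝ × ℝ → ℝ} (hf : ContDiff ℝ (⊤ : ℕ∞) f) :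
    ContDiff ℝ (⊤ : ℕ∞) (PXd f) := by
  have h1 : ContDiff ℝ (⊤ : ℕ∞) (fderiv ℝ f) :=
    hf.fderiv_right (m := (⊤ : ℕ∞)) (by exact_mod_cast le_top)
  exact (ContinuousLinearMap.apply ℝ ℝ ((0:ℝ), (1:ℝ))).contDiff.comp h1

/-- Second derivative is nonnegative at a local minimum. -/
lemma second_deriv_nonneg_of_isLocalMin {g : ℝ → ℝ} {a : ℝ}
    (hg : Differentiable ℝ g) (hg' : DifferentiableAt ℝ (deriv g) a)
    (h : IsLocalMin g a) : 0 ≤ deriv (deriv g) a := by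
  by_contra hlt
  push_neg at hlt
  have h0 : deriv g a = 0 := h.deriv_eq_zero
  have hd : HasDerivAt (deriv g) (deriv (deriv g) a) a := hg'.hasDerivAt
  have hslope : Tendsto (slope (deriv g) a) (𝓝[≠] a) (𝓝 (deriv (deriv g) a)) :=
    hasDerivAt_iff_tendsto_slope.mp hd
  have hslope' : Tendsto (slope (deriv g) a) (𝓝[>] a) (𝓝 (deriv (deriv g) a)) :=
    hslope.mono_left (nhdsWithin_mono a (fun x hx => ne_of_gt hx))
  have hev : ∀ᶠ x in 𝓝[>] a, slope (deriv g) a x < 0 :=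
    hslope' (Iio_mem_nhds hlt)
  have hev2 : ∀ᶠ x in 𝓝[>] a, deriv g x < 0 := by
    filter_upwards [hev, self_mem_nhdsWithin] with x hx hx'
    have hxa : 0 < x - a := sub_pos.mpr hx'
    rw [slope_def_field, h0, sub_zero] at hx
    by_contra hc
    push_neg at hc
    exact absurd hx (not_lt.mpr (div_nonneg hc hxa.le))
  have hmin : ∀ᶠ x in 𝓝[>] a, g a ≤ g x := h.filter_mono nhdsWithin_le_nhds
  obtain ⟨u, hu, hsub⟩ := mem_nhdsGT_iff_exists_Ioo_subset.mp (hev2.and hmin)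
  have hau : a < u := mem_Ioi.mp hu
  set b := (a + u) / 2 with hb
  have hab : a < b := by rw [hb]; linarith
  have hbu : b < u := by rw [hb]; linarith
  have hanti : StrictAntiOn g (Icc a b) := by
    apply strictAntiOn_of_deriv_neg (convex_Icc a b) hg.continuous.continuousOn
    intro x hx
    rw [interior_Icc] at hx
    exact (hsub ⟨hx.1, hx.2.trans hbu⟩).1
  have h1 : g b < g a := hanti (left_mem_Icc.mpr hab.le) (right_mem_Icc.mpr hab.le) hab
  have h2 : g a ≤ g b := (hsub ⟨hab, hbu⟩).2
  linarith

/-- Second derivative is nonpositive at a local maximum. -/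
lemma second_deriv_nonpos_of_isLocalMax {g : ℝ → ℝ} {a : ℝ}
    (hg : Differentiable ℝ g) (hg' : DifferentiableAt ℝ (deriv g) a)
    (h : IsLocalMax g a) : deriv (deriv g) a ≤ 0 := by
  have e1 : (deriv fun y => -g y) = fun y => -(deriv g y) := funext fun y => deriv.neg
  have hneg : 0 ≤ deriv (deriv fun y => -g y) a := by
    refine second_deriv_nonneg_of_isLocalMin hg.neg ?_ h.neg
    rw [e1]
    exact hg'.neg
  rw [e1] at hneg
  have e2 : deriv (fun y => -(deriv g y)) a = -(deriv (deriv g) a) := deriv.neg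
  linarith [e2 ▸ hneg]

lemma periodic_deriv' {f : ℝ → ℝ} {c : ℝ} (h : Function.Periodic f c) :
    Function.Periodic (deriv f) c := by
  intro x
  have h1 : (fun y => f (y + c)) = f := funext fun y => h y
  calc deriv f (x + c) = deriv (fun y => f (y + c)) x := (deriv_comp_add_const f c x).symm
  _ = deriv f x := by rw [h1]

/-- Uniform bound for a continuous, space-periodic function on a time strip. -/
lemma bound_on_strip {g : ℝ × ℝ → ℝ} (hg : Continuous g)
    (hper : ∀ t, Function.Periodic (fun x => g (t, x)) (2 * π)) (T : ℝ) (hT : 0 ≤ T) :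
    ∃ C : ℝ, 0 ≤ C ∧ ∀ t ∈ Icc (0:ℝ) T, ∀ x : ℝ, |g (t, x)| ≤ C := by
  have hπ : (0:ℝ) < 2 * π := by positivity
  have hIcc : -π + 2 * π = π := by ring
  have hKc : IsCompact (Icc (0:ℝ) T ×ˢ Icc (-π) π) := isCompact_Icc.prod isCompact_Icc
  have hKne : (Icc (0:ℝ) T ×ˢ Icc (-π) π).Nonempty := by
    exact ⟨(0, 0), ⟨⟨le_refl 0, hT⟩, ⟨by simp; linarith [Real.pi_pos], by simp [Real.pi_pos.le]⟩⟩⟩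
  obtain ⟨p₀, _, hmax⟩ := hKc.exists_isMaxOn hKne (hg.abs.continuousOn)
  refine ⟨|g p₀|, abs_nonneg _, ?_⟩
  intro t ht x
  obtain ⟨y, hy, hye⟩ := (hper t).exists_mem_Ico hπ x (-π)
  rw [hIcc] at hy
  have : |g (t, y)| ≤ |g p₀| := hmax ⟨ht, ⟨hy.1, hy.2.le⟩⟩
  simpa [← hye] using this

/-- Uniform positive lower bound for a continuous positive space-periodic function. -/
lemma pos_lb_on_strip {g : ℝ × ℝ → ℝ} (hg : Continuous g)
    (hper : ∀ t, Function.Periodic (fun x => g (t, x)) (2 * π))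
    (hpos : ∀ p, 0 < g p) (T : ℝ) (hT : 0 ≤ T) :
    ∃ c : ℝ, 0 < c ∧ ∀ t ∈ Icc (0:ℝ) T, ∀ x : ℝ, c ≤ g (t, x) := by
  have hπ : (0:ℝ) < 2 * π := by positivity
  have hIcc : -π + 2 * π = π := by ring
  have hKc : IsCompact (Icc (0:ℝ) T ×ˢ Icc (-π) π) := isCompact_Icc.prod isCompact_Icc
  have hKne : (Icc (0:ℝ) T ×ˢ Icc (-π) π).Nonempty := by
    exact ⟨(0, 0), ⟨⟨le_refl 0, hT⟩, ⟨by simp; linarith [Real.pi_pos], by simp [Real.pi_pos.le]⟩⟩⟩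
  obtain ⟨p₀, _, hmin⟩ := hKc.exists_isMinOn hKne hg.continuousOn
  refine ⟨g p₀, hpos p₀, ?_⟩
  intro t ht x
  obtain ⟨y, hy, hye⟩ := (hper t).exists_mem_Ico hπ x (-π)
  rw [hIcc] at hy
  have : g p₀ ≤ g (t, y) := hmin ⟨ht, ⟨hy.1, hy.2.le⟩⟩
  simpa [← hye] using this

end Auxiliary
section Touch
open Real Set Function Filter Topology

/-- First-touching-time lemma for periodic functions on `[0,T] × ℝ`. -/
lemma touching_full {T : ℝ} (hT : 0 < T) (F : ℝ → ℝ → ℝ)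
    (hFc : ContinuousOn (Function.uncurry F) (Icc 0 T ×ˢ (univ : Set ℝ)))
    (hFd : ∀ x : ℝ, ∀ t ∈ Ioc (0:ℝ) T, DifferentiableAt ℝ (fun s => F s x) t)
    (hper : ∀ t, Function.Periodic (F t) (2 * π))
    (h0 : ∀ x, 0 < F 0 x)
    (hbad : ∃ t ∈ Icc (0:ℝ) T, ∃ x : ℝ, F t x ≤ 0) :
    ∃ t' ∈ Ioc (0:ℝ) T, ∃ x' : ℝ, F t' x' = 0 ∧ (∀ x, 0 ≤ F t' x) ∧
      deriv (fun s => F s x') t' ≤ 0 := by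
  have hπ : (0:ℝ) < 2 * π := by positivity
  have hIcc : -π + 2 * π = π := by ring
  obtain ⟨t₀, ht₀, x₀, hx₀⟩ := hbad
  obtain ⟨y₀, hy₀, hy₀e⟩ := (hper t₀).exists_mem_Ico hπ x₀ (-π)
  rw [hIcc] at hy₀
  set K : Set (ℝ × ℝ) := Icc 0 T ×ˢ Icc (-π) π with hK
  have hKsub : K ⊆ Icc 0 T ×ˢ (univ : Set ℝ) := prod_mono_right (subset_univ _)
  have hKc : IsCompact K := (isCompact_Icc).prod isCompact_Icc
  set A : Set (ℝ × ℝ) := K ∩ Function.uncurry F ⁻¹' Iic 0 with hA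
  have hAK : A ⊆ K := inter_subset_left
  have hAcl : IsClosed A :=
    (hFc.mono hKsub).preimage_isClosed_of_isClosed hKc.isClosed isClosed_Iic
  have hAcomp : IsCompact A := hKc.of_isClosed_subset hAcl hAK
  have hAne : A.Nonempty := by
    refine ⟨(t₀, y₀), ⟨⟨ht₀, ⟨hy₀.1, hy₀.2.le⟩⟩, ?_⟩⟩
    simp only [Set.mem_preimage, Function.uncurry, Set.mem_Iic]
    rw [← hy₀e]; exact hx₀
  set S := Prod.fst '' A with hS
  have hScomp : IsCompact S := hAcomp.image continuous_fst
  have hSne : S.Nonempty := hAne.image _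
  set t' := sInf S with ht'
  have ht'S : t' ∈ S := hScomp.sInf_mem hSne
  obtain ⟨⟨t₁, x₁⟩, hpA, hpe⟩ := ht'S
  simp only at hpe
  subst hpe
  have ht'm : t' ∈ Icc (0:ℝ) T := hpA.1.1
  have hFx₁ : F t' x₁ ≤ 0 := hpA.2
  have ht'pos : 0 < t' := by
    rcases ht'm.1.lt_or_eq with h | h
    · exact h
    · exact absurd (h ▸ hFx₁) (not_le.mpr (h ▸ h0 x₁))
  have hbefore : ∀ t ∈ Ico (0:ℝ) t', ∀ x, 0 < F t x := by
    intro t ht x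
    by_contra hc
    push_neg at hc
    obtain ⟨y, hy, hye⟩ := (hper t).exists_mem_Ico hπ x (-π)
    rw [hIcc] at hy
    have htT : t ∈ Icc (0:ℝ) T := ⟨ht.1, ht.2.le.trans ht'm.2⟩
    have hmem : (t, y) ∈ A := ⟨⟨htT, ⟨hy.1, hy.2.le⟩⟩, by
      simp only [Set.mem_preimage, Function.uncurry, Set.mem_Iic]; rw [← hye]; exact hc⟩
    have : t' ≤ t := csInf_le hScomp.bddBelow ⟨(t, y), hmem, rfl⟩
    exact absurd ht.2 (not_lt.mpr this)
  have hcont_slice : ContinuousOn (F t') (Icc (-π) π) := by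
    have : ContinuousOn (fun x => Function.uncurry F (t', x)) (Icc (-π) π) := by
      apply hFc.comp (Continuous.continuousOn (Continuous.prodMk_right t'))
      intro x _; exact ⟨ht'm, mem_univ x⟩
    exact this
  obtain ⟨x', hx'mem, hx'min⟩ :=
    isCompact_Icc.exists_isMinOn (nonempty_Icc.mpr (by linarith [Real.pi_pos])) hcont_slice
  have hFx' : F t' x' ≤ 0 := le_trans (hx'min hpA.1.2) hFx₁
  set g := fun s => F s x' with hg
  have hgc : ContinuousOn g (Icc 0 T) := by
    have : ContinuousOn (fun s => Function.uncurry F (s, x')) (Icc 0 T) :=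
      hFc.comp (Continuous.continuousOn (continuous_id.prodMk continuous_const))
        (fun s hs => ⟨hs, mem_univ x'⟩)
    exact this
  have hgpos : ∀ s ∈ Ico (0:ℝ) t', 0 < g s := fun s hs => hbefore s hs x'
  have hne : (𝓝[Ico (0:ℝ) t'] t').NeBot := by
    rw [← mem_closure_iff_nhdsWithin_neBot, closure_Ico ht'pos.ne]
    exact ⟨ht'pos.le, le_refl t'⟩
  have hgt : Tendsto g (𝓝[Ico (0:ℝ) t'] t') (𝓝 (g t')) :=
    (hgc t' ht'm).mono (Ico_subset_Icc_self.trans (Icc_subset_Icc_right ht'm.2))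
  have hge : 0 ≤ g t' :=
    ge_of_tendsto hgt (by filter_upwards [self_mem_nhdsWithin] with s hs; exact (hgpos s hs).le)
  have hFt'x' : F t' x' = 0 := le_antisymm hFx' hge
  refine ⟨t', ⟨ht'pos, ht'm.2⟩, x', hFt'x', ?_, ?_⟩
  · intro x
    obtain ⟨y, hy, hye⟩ := (hper t').exists_mem_Ico hπ x (-π)
    rw [hIcc] at hy
    rw [hye]
    calc (0:ℝ) = F t' x' := hFt'x'.symm
    _ ≤ F t' y := hx'min ⟨hy.1, hy.2.le⟩
  · have hd : HasDerivAt g (deriv g t') t' := (hFd x' t' ⟨ht'pos, ht'm.2⟩).hasDerivAt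
    have hslope : Tendsto (slope g t') (𝓝[≠] t') (𝓝 (deriv g t')) :=
      hasDerivAt_iff_tendsto_slope.mp hd
    have hsub : Ico (0:ℝ) t' ⊆ {t'}ᶜ := fun s hs => ne_of_lt hs.2
    have hslope' : Tendsto (slope g t') (𝓝[Ico (0:ℝ) t'] t') (𝓝 (deriv g t')) :=
      hslope.mono_left (nhdsWithin_mono t' hsub)
    refine le_of_tendsto hslope' ?_
    filter_upwards [self_mem_nhdsWithin] with s hs
    have h1 : 0 < g s := hgpos s hs
    have h2 : s - t' < 0 := sub_neg.mpr hs.2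
    rw [slope_def_field]
    have h3 : g t' = 0 := hFt'x'
    rw [h3, sub_zero]
    exact le_of_lt (div_neg_of_pos_of_neg h1 h2)
end Touch

section SmoothFamily

open Function Filter Topology

variable {f : ℝ → ℝ → ℝ}

lemma pdx_hasDerivAt (hf : ContDiff ℝ (⊤ : ℕ∞) (Function.uncurry f)) (t x : ℝ) :
    HasDerivAt (fun y => f t y) (PXd (Function.uncurry f) (t, x)) x :=
  hasDerivAt_snd' (hf.differentiable (by simp)) t x

lemma pdt_hasDerivAt (hf : ContDiff ℝ (⊤ : ℕ∞) (Function.uncurry f)) (t x : ℝ) :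
    HasDerivAt (fun s => f s x) (PTd (Function.uncurry f) (t, x)) t :=
  hasDerivAt_fst' (hf.differentiable (by simp)) t x

lemma pdx_eq' (hf : ContDiff ℝ (⊤ : ℕ∞) (Function.uncurry f)) (t x : ℝ) :
    pdx f t x = PXd (Function.uncurry f) (t, x) :=
  (pdx_hasDerivAt hf t x).deriv

lemma pdt_eq' (hf : ContDiff ℝ (⊤ : ℕ∞) (Function.uncurry f)) (t x : ℝ) :
    pdt f t x = PTd (Function.uncurry f) (t, x) :=
  (pdt_hasDerivAt hf t x).deriv

lemma pdxFun_eq (hf : ContDiff ℝ (⊤ : ℕ∞) (Function.uncurry f)) (t : ℝ) :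
    (fun y => pdx f t y) = (fun y => PXd (Function.uncurry f) (t, y)) :=
  funext fun y => pdx_eq' hf t y

/-- The second spatial derivative at a point, via `PXd`. -/
lemma deriv_pdx_eq (hf : ContDiff ℝ (⊤ : ℕ∞) (Function.uncurry f)) (t x : ℝ) :
    deriv (fun y => pdx f t y) x = PXd (PXd (Function.uncurry f)) (t, x) := by
  rw [pdxFun_eq hf t]
  exact (hasDerivAt_snd' ((contDiff_PXd hf).differentiable (by simp)) (t := t) (x := x)).deriv

/-- Expansion of the diffusion term at a spatial critical point. -/
lemma diffusion_expand {k ω : ℝ → ℝ → ℝ}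
    (hk : ContDiff ℝ (⊤ : ℕ∞) (Function.uncurry k))
    (hω : ContDiff ℝ (⊤ : ℕ∞) (Function.uncurry ω))
    (hf : ContDiff ℝ (⊤ : ℕ∞) (Function.uncurry f))
    (hωne : ∀ t x, ω t x ≠ 0) (t x : ℝ) (hcrit : pdx f t x = 0) :
    deriv (fun y => k t y / ω t y * pdx f t y) x
      = k t x / ω t x * PXd (PXd (Function.uncurry f)) (t, x) := by
  have hq : DifferentiableAt ℝ (fun y => k t y / ω t y) x := by
    exact ((pdx_hasDerivAt hk t x).differentiableAt.div
      (pdx_hasDerivAt hω t x).differentiableAt (hωne t x))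
  have hp : DifferentiableAt ℝ (fun y => pdx f t y) x := by
    rw [pdxFun_eq hf t]
    exact (hasDerivAt_snd' ((contDiff_PXd hf).differentiable (by simp)) (t := t) (x := x)).differentiableAt
  rw [deriv_fun_mul hq hp, hcrit, mul_zero, zero_add, deriv_pdx_eq hf t x]

lemma PXd_periodic {g : ℝ × ℝ → ℝ} {c : ℝ} (hg : Differentiable ℝ g)
    (hgp : ∀ t, Function.Periodic (fun x => g (t, x)) c) :
    ∀ t, Function.Periodic (fun x => PXd g (t, x)) c := by
  intro t
  have h1 : (fun x => PXd g (t, x)) = deriv (fun x => g (t, x)) :=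
    funext fun x => ((hasDerivAt_snd' hg t x).deriv).symm
  rw [h1]
  exact periodic_deriv' (hgp t)

section Step1

open Function Filter Topology

lemma k_nonneg_aux (α₂ α₃ α₄ T : ℝ) (hα₃ : 0 < α₃) (hT : 0 < T)
    (u ω k : ℝ → ℝ → ℝ)
    (hu : ContDiff ℝ (⊤ : ℕ∞) (Function.uncurry u))
    (hω : ContDiff ℝ (⊤ : ℕ∞) (Function.uncurry ω))
    (hk : ContDiff ℝ (⊤ : ℕ∞) (Function.uncurry k))
    (hup : ∀ t, Function.Periodic (u t) (2 * π))
    (hωp : ∀ t, Function.Periodic (ω t) (2 * π))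
    (hkp : ∀ t, Function.Periodic (k t) (2 * π))
    (hωpos : ∀ t x, 0 < ω t x)
    (eqk : ∀ t ∈ Icc (0:ℝ) T, ∀ x : ℝ,
      pdt k t x + u t x * pdx k t x
        - α₃ * deriv (fun y => k t y / ω t y * pdx k t y) x
        = -(k t x) * ω t x + α₄ * (k t x / ω t x) * (pdx u t x) ^ 2)
    (hk0 : ∀ x : ℝ, 0 ≤ k 0 x) :
    ∀ t ∈ Icc (0:ℝ) T, ∀ x : ℝ, 0 ≤ k t x := by
  have hωne : ∀ t x, ω t x ≠ 0 := fun t x => (hωpos t x).ne'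
  have hωdiff : Differentiable ℝ (Function.uncurry ω) := hω.differentiable (by simp)
  have hudiff : Differentiable ℝ (Function.uncurry u) := hu.differentiable (by simp)
  have hkdiff : Differentiable ℝ (Function.uncurry k) := hk.differentiable (by simp)
  -- positive lower bound for ω
  obtain ⟨c₀, hc₀, hc₀le⟩ := pos_lb_on_strip hω.continuous
    (fun t => fun x => hωp t x) (fun p => hωpos p.1 p.2) T hT.le
  -- bound for the second spatial derivative of k
  have hkxx_cont : Continuous (PXd (PXd (Function.uncurry k))) :=
    (contDiff_PXd (contDiff_PXd hk)).continuous
  have hkx_per : ∀ t, Function.Periodic (fun x => PXd (Function.uncurry k) (t, x)) (2 * π) :=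
    PXd_periodic hkdiff (fun t => fun x => hkp t x)
  have hkxx_per : ∀ t, Function.Periodic (fun x => PXd (PXd (Function.uncurry k)) (t, x)) (2 * π) :=
    PXd_periodic ((contDiff_PXd hk).differentiable (by simp)) hkx_per
  obtain ⟨C₂, hC₂0, hC₂⟩ := bound_on_strip hkxx_cont hkxx_per T hT.le
  -- bound for the zeroth-order coefficient
  set cfun : ℝ × ℝ → ℝ :=
    fun p => -(Function.uncurry ω p) + α₄ * (PXd (Function.uncurry u) p) ^ 2 / Function.uncurry ω p
    with hcfun
  have hcfun_cont : Continuous cfun := by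
    apply Continuous.add hω.continuous.neg
    exact (continuous_const.mul ((contDiff_PXd hu).continuous.pow 2)).div hω.continuous
      (fun p => hωne p.1 p.2)
  have hux_per : ∀ t, Function.Periodic (fun x => PXd (Function.uncurry u) (t, x)) (2 * π) :=
    PXd_periodic hudiff (fun t => fun x => hup t x)
  have hcfun_per : ∀ t, Function.Periodic (fun x => cfun (t, x)) (2 * π) := by
    intro t x
    have h2 : PXd (Function.uncurry u) (t, x + 2 * π) = PXd (Function.uncurry u) (t, x) :=
      hux_per t x
    simp only [hcfun, Function.uncurry]
    rw [show ω t (x + 2 * π) = ω t x from hωp t x, h2]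
  obtain ⟨Cc, hCc0, hCc⟩ := bound_on_strip hcfun_cont hcfun_per T hT.le
  set L : ℝ := α₃ * C₂ / c₀ + Cc with hL
  have hL0 : 0 ≤ L := by positivity
  set Λ : ℝ := L + 1 with hΛ
  -- main barrier claim
  have key : ∀ ε : ℝ, 0 < ε → ∀ t ∈ Icc (0:ℝ) T, ∀ x : ℝ, 0 < k t x + ε * Real.exp (Λ * t) := by
    intro ε hε
    by_contra hbad
    push_neg at hbad
    obtain ⟨t', ht', x', hF0, hFnn, hFd'⟩ := touching_full hT
      (fun t x => k t x + ε * Real.exp (Λ * t))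
      (Continuous.continuousOn (by
        exact hk.continuous.add
          (continuous_const.mul (Real.continuous_exp.comp (continuous_const.mul continuous_fst)))))
      (fun x t ht => ((pdt_hasDerivAt hk t x).add
        ((((hasDerivAt_id t).const_mul Λ).exp).const_mul ε)).differentiableAt)
      (fun t x => by
        simp only
        rw [show k t (x + 2 * π) = k t x from hkp t x])
      (fun x => by
        simp only [mul_zero, Real.exp_zero, mul_one]
        linarith [hk0 x])
      hbad
    set b : ℝ := ε * Real.exp (Λ * t') with hb
    have hbpos : 0 < b := by positivity
    have hF0' : k t' x' + b = 0 := hF0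
    have hkval : k t' x' = -b := by linarith
    have hmin : ∀ x, k t' x' ≤ k t' x := by
      intro x
      have h := hFnn x
      linarith
    have hloc : IsLocalMin (k t') x' := Filter.Eventually.of_forall hmin
    have hcrit : pdx k t' x' = 0 := hloc.deriv_eq_zero
    have ht'Icc : t' ∈ Icc (0:ℝ) T := ⟨ht'.1.le, ht'.2⟩
    have heq := eqk t' ht'Icc x'
    rw [diffusion_expand hk hω hk hωne t' x' hcrit, hcrit, mul_zero, add_zero] at heq
    set D2 : ℝ := PXd (PXd (Function.uncurry k)) (t', x') with hD2def
    set ωv : ℝ := ω t' x' with hωv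
    set pu : ℝ := pdx u t' x' with hpu
    have hωvc : c₀ ≤ ωv := hc₀le t' ht'Icc x'
    have hD2 : |D2| ≤ C₂ := hC₂ t' ht'Icc x'
    have hcv : |cfun (t', x')| ≤ Cc := hCc t' ht'Icc x'
    have hcveq : cfun (t', x') = -ωv + α₄ * pu ^ 2 / ωv := by
      simp only [hcfun, Function.uncurry]
      rw [← pdx_eq' hu t' x']
    -- lower bound on the diffusion term
    have hq1 : -(b / c₀) * C₂ ≤ (k t' x' / ωv) * D2 := by
      have habs : |(k t' x' / ωv) * D2| ≤ (b / c₀) * C₂ := by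
        rw [abs_mul, abs_div, hkval, abs_neg]
        apply mul_le_mul _ hD2 (abs_nonneg _) (by positivity)
        rw [abs_of_pos hbpos, abs_of_pos (lt_of_lt_of_le hc₀ hωvc)]
        exact div_le_div_of_nonneg_left hbpos.le hc₀ hωvc
      linarith [neg_abs_le ((k t' x' / ωv) * D2), habs]
    -- lower bound on the zeroth order term
    have hz : -(k t' x') * ωv + α₄ * (k t' x' / ωv) * pu ^ 2 = k t' x' * cfun (t', x') := by
      rw [hcveq]
      field_simp
    have hz2 : -b * Cc ≤ k t' x' * cfun (t', x') := by
      rw [hkval]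
      have h1 : cfun (t', x') ≤ Cc := (abs_le.mp hcv).2
      nlinarith [hbpos.le]
    -- combine: lower bound on pdt k
    have hpdt_eq : pdt k t' x' = α₃ * (k t' x' / ωv * D2) + (-(k t' x') * ωv + α₄ * (k t' x' / ωv) * pu ^ 2) := by
      linarith [heq]
    have hlow : -b * L ≤ pdt k t' x' := by
      have h1' : α₃ * (-(b / c₀) * C₂) ≤ α₃ * (k t' x' / ωv * D2) :=
        mul_le_mul_of_nonneg_left hq1 hα₃.le
      have hre : -b * L = α₃ * (-(b / c₀) * C₂) + (-b * Cc) := by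
        rw [hL]; field_simp; ring
      rw [hpdt_eq, hz, hre]
      exact add_le_add h1' hz2
    -- upper bound from the touching time derivative
    have h5 : HasDerivAt (fun s => k s x' + ε * Real.exp (Λ * s))
        (pdt k t' x' + ε * (Real.exp (Λ * t') * (Λ * 1))) t' := by
      have ha : HasDerivAt (fun s => k s x') (pdt k t' x') t' := by
        rw [pdt_eq' hk]
        exact pdt_hasDerivAt hk t' x'
      exact ha.add ((((hasDerivAt_id t').const_mul Λ).exp).const_mul ε)
    have h6 : pdt k t' x' + ε * (Real.exp (Λ * t') * (Λ * 1)) ≤ 0 := by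
      rw [← h5.deriv]
      exact hFd'
    have h7 : ε * (Real.exp (Λ * t') * (Λ * 1)) = Λ * b := by rw [hb]; ring
    rw [h7] at h6
    -- contradiction
    rw [hΛ] at h6
    nlinarith [hbpos]
  -- conclude nonnegativity
  intro t ht x
  by_contra hneg
  push_neg at hneg
  have hexp : (0:ℝ) < Real.exp (Λ * t) := Real.exp_pos _
  set ε : ℝ := -k t x / (2 * Real.exp (Λ * t)) with hε
  have hεpos : 0 < ε := by
    apply div_pos (by linarith) (by positivity)
  have h := key ε hεpos t ht x
  have h2 : ε * Real.exp (Λ * t) = -k t x / 2 := by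
    rw [hε]
    field_simp
  rw [h2] at h
  linarith

end Step1

section Step2

open Function Filter Topology

lemma omega_bound_aux (α₁ α₂ T : ℝ) (hα₁ : 0 < α₁) (hα₂ : 0 < α₂) (hT : 0 < T)
    (u ω k : ℝ → ℝ → ℝ)
    (hω : ContDiff ℝ (⊤ : ℕ∞) (Function.uncurry ω))
    (hk : ContDiff ℝ (⊤ : ℕ∞) (Function.uncurry k))
    (hωp : ∀ t, Function.Periodic (ω t) (2 * π))
    (hωpos : ∀ t x, 0 < ω t x)
    (eqw : ∀ t ∈ Icc (0:ℝ) T, ∀ x : ℝ,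
      pdt ω t x + u t x * pdx ω t x
        - α₁ * deriv (fun y => k t y / ω t y * pdx ω t y) x = -α₂ * (ω t x) ^ 2)
    (hknn : ∀ t ∈ Icc (0:ℝ) T, ∀ x : ℝ, 0 ≤ k t x)
    (ωstar : ℝ) (hωstar : 0 < ωstar) (hω0 : ∀ x : ℝ, ω 0 x ≤ ωstar)
    (δ : ℝ) (hδ : 0 < δ) :
    ∀ t ∈ Icc (0:ℝ) T, ∀ x : ℝ, ω t x < ωstar / (ωstar * α₂ * t + 1) + δ := by
  have hωne : ∀ t x, ω t x ≠ 0 := fun t x => (hωpos t x).ne'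
  have hden : ∀ t : ℝ, 0 ≤ t → 0 < ωstar * α₂ * t + 1 := by
    intro t ht; positivity
  by_contra hbad
  push_neg at hbad
  obtain ⟨t₀, ht₀, x₀, hx₀⟩ := hbad
  obtain ⟨t', ht', x', hF0, hFnn, hFd'⟩ := touching_full hT
    (fun t x => ωstar / (ωstar * α₂ * t + 1) + δ - ω t x)
    (by
      apply ContinuousOn.sub _ hω.continuous.continuousOn
      apply ContinuousOn.add _ continuousOn_const
      apply ContinuousOn.div continuousOn_const
        (((continuous_const.mul continuous_fst).add continuous_const).continuousOn)
      intro p hp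
      exact (hden p.1 hp.1.1).ne')
    (by
      intro x t ht
      have hd : HasDerivAt (fun s : ℝ => ωstar * α₂ * s + 1) (ωstar * α₂) t := by
        simpa using ((hasDerivAt_id t).const_mul (ωstar * α₂)).add_const 1
      have hW : HasDerivAt (fun s => ωstar / (ωstar * α₂ * s + 1) + δ)
          ((0 * (ωstar * α₂ * t + 1) - ωstar * (ωstar * α₂)) / (ωstar * α₂ * t + 1) ^ 2) t :=
        HasDerivAt.add_const δ (((hasDerivAt_const t ωstar).div hd (hden t ht.1.le).ne'))
      exact (hW.sub (pdt_hasDerivAt hω t x)).differentiableAt)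
    (by
      intro t x
      simp only
      rw [show ω t (x + 2 * π) = ω t x from hωp t x])
    (by
      intro x
      simp only [mul_zero, zero_add, div_one]
      linarith [hω0 x])
    ⟨t₀, ht₀, x₀, by linarith⟩
  have ht'Icc : t' ∈ Icc (0:ℝ) T := ⟨ht'.1.le, ht'.2⟩
  set den : ℝ := ωstar * α₂ * t' + 1 with hdendef
  have hdenpos : 0 < den := hden t' ht'.1.le
  set W : ℝ := ωstar / den with hWdef
  have hWpos : 0 < W := div_pos hωstar hdenpos
  have hval : ω t' x' = W + δ := by
    have h := hF0
    linarith
  have hmax : ∀ x, ω t' x ≤ ω t' x' := by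
    intro x
    have h := hFnn x
    linarith
  have hloc : IsLocalMax (ω t') x' := Filter.Eventually.of_forall hmax
  have hcrit : pdx ω t' x' = 0 := hloc.deriv_eq_zero
  -- second derivative sign
  have hωtdiff : Differentiable ℝ (ω t') := fun y => (pdx_hasDerivAt hω t' y).differentiableAt
  have he : deriv (ω t') = fun y => PXd (Function.uncurry ω) (t', y) :=
    funext fun y => pdx_eq' hω t' y
  have hd' : DifferentiableAt ℝ (deriv (ω t')) x' := by
    rw [he]
    exact (hasDerivAt_snd' ((contDiff_PXd hω).differentiable (by simp))
      (t := t') (x := x')).differentiableAt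
  have hxx : deriv (deriv (ω t')) x' ≤ 0 :=
    second_deriv_nonpos_of_isLocalMax hωtdiff hd' hloc
  have hD2ω : deriv (deriv (ω t')) x' = PXd (PXd (Function.uncurry ω)) (t', x') :=
    deriv_pdx_eq hω t' x'
  have hxx2 : PXd (PXd (Function.uncurry ω)) (t', x') ≤ 0 := hD2ω ▸ hxx
  -- PDE at the touching point
  have heq := eqw t' ht'Icc x'
  rw [diffusion_expand hk hω hω hωne t' x' hcrit, hcrit, mul_zero, add_zero] at heq
  have hq : 0 ≤ k t' x' / ω t' x' := div_nonneg (hknn t' ht'Icc x') (hωpos t' x').le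
  have hdiff_np : k t' x' / ω t' x' * PXd (PXd (Function.uncurry ω)) (t', x') ≤ 0 :=
    mul_nonpos_of_nonneg_of_nonpos hq hxx2
  have hup : pdt ω t' x' ≤ -α₂ * (W + δ) ^ 2 := by
    have h1 : α₁ * (k t' x' / ω t' x' * PXd (PXd (Function.uncurry ω)) (t', x')) ≤ 0 :=
      mul_nonpos_of_nonneg_of_nonpos hα₁.le hdiff_np
    rw [← hval]
    linarith [heq]
  -- time derivative at the touching point
  have hd2 : HasDerivAt (fun s : ℝ => ωstar * α₂ * s + 1) (ωstar * α₂) t' := by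
    simpa using ((hasDerivAt_id t').const_mul (ωstar * α₂)).add_const 1
  have hW' : HasDerivAt (fun s => ωstar / (ωstar * α₂ * s + 1) + δ - ω s x')
      ((0 * den - ωstar * (ωstar * α₂)) / den ^ 2 - pdt ω t' x') t' := by
    refine HasDerivAt.sub ?_ ?_
    · exact HasDerivAt.add_const δ ((hasDerivAt_const t' ωstar).div hd2 hdenpos.ne')
    · rw [pdt_eq' hω]
      exact pdt_hasDerivAt hω t' x'
  have h6 : (0 * den - ωstar * (ωstar * α₂)) / den ^ 2 - pdt ω t' x' ≤ 0 := by
    rw [← hW'.deriv]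
    exact hFd'
  have h7 : (0 * den - ωstar * (ωstar * α₂)) / den ^ 2 = -α₂ * W ^ 2 := by
    rw [hWdef]
    field_simp
    ring
  rw [h7] at h6
  -- contradiction
  have hkey : -α₂ * W ^ 2 - (-α₂ * (W + δ) ^ 2) = α₂ * δ * (2 * W + δ) := by ring
  have hpos : 0 < α₂ * δ * (2 * W + δ) := by positivity
  linarith

end Step2

section Step3

open Function Filter Topology

lemma k_decay_aux (α₂ α₃ α₄ T : ℝ) (hα₂ : 0 < α₂) (hα₃ : 0 < α₃) (hT : 0 < T)
    (u ω k : ℝ → ℝ → ℝ)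
    (hu : ContDiff ℝ (⊤ : ℕ∞) (Function.uncurry u))
    (hω : ContDiff ℝ (⊤ : ℕ∞) (Function.uncurry ω))
    (hk : ContDiff ℝ (⊤ : ℕ∞) (Function.uncurry k))
    (hkp : ∀ t, Function.Periodic (k t) (2 * π))
    (hωpos : ∀ t x, 0 < ω t x)
    (eqk : ∀ t ∈ Icc (0:ℝ) T, ∀ x : ℝ,
      pdt k t x + u t x * pdx k t x
        - α₃ * deriv (fun y => k t y / ω t y * pdx k t y) x
        = -(k t x) * ω t x + α₄ * (k t x / ω t x) * (pdx u t x) ^ 2)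
    (hα₄ : 0 < α₄)
    (ωstar : ℝ) (hωstar : 0 < ωstar)
    (c : ℝ) (hc : 0 < c) (η : ℝ) (hη : 0 < η)
    (hωb : ∀ t ∈ Icc (0:ℝ) T, ∀ x : ℝ,
      ω t x < ωstar / (ωstar * α₂ * t + 1) + η * ωstar / (2 * (ωstar * α₂ * T + 1)))
    (hk0c : ∀ x : ℝ, c < k 0 x) :
    ∀ t ∈ Icc (0:ℝ) T, ∀ x : ℝ,
      c * (ωstar * α₂ * t + 1) ^ (-((1 + η) / α₂)) ≤ k t x := by
  have hωne : ∀ t x, ω t x ≠ 0 := fun t x => (hωpos t x).ne'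
  set γ : ℝ := (1 + η) / α₂ with hγdef
  set δ : ℝ := η * ωstar / (2 * (ωstar * α₂ * T + 1)) with hδdef
  have hden : ∀ t : ℝ, 0 ≤ t → 0 < ωstar * α₂ * t + 1 := fun t ht => by positivity
  by_contra hbad
  push_neg at hbad
  obtain ⟨t₀, ht₀, x₀, hx₀⟩ := hbad
  obtain ⟨t', ht', x', hF0, hFnn, hFd'⟩ := touching_full hT
    (fun t x => k t x - c * (ωstar * α₂ * t + 1) ^ (-γ))
    (by
      apply ContinuousOn.sub hk.continuous.continuousOn
      apply ContinuousOn.mul continuousOn_const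
      apply ContinuousOn.rpow_const
        (((continuous_const.mul continuous_fst).add continuous_const).continuousOn)
      intro p hp
      exact Or.inl (hden p.1 hp.1.1).ne')
    (by
      intro x t ht
      have hd : HasDerivAt (fun s : ℝ => ωstar * α₂ * s + 1) (ωstar * α₂) t := by
        simpa using ((hasDerivAt_id t).const_mul (ωstar * α₂)).add_const 1
      have hr : HasDerivAt (fun s => (ωstar * α₂ * s + 1) ^ (-γ))
          (ωstar * α₂ * (-γ) * (ωstar * α₂ * t + 1) ^ (-γ - 1)) t :=
        hd.rpow_const (Or.inl (hden t ht.1.le).ne')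
      exact ((pdt_hasDerivAt hk t x).sub (hr.const_mul c)).differentiableAt)
    (by
      intro t x
      simp only
      rw [show k t (x + 2 * π) = k t x from hkp t x])
    (by
      intro x
      simp only [mul_zero, zero_add, Real.one_rpow, mul_one]
      linarith [hk0c x])
    ⟨t₀, ht₀, x₀, by linarith⟩
  have ht'Icc : t' ∈ Icc (0:ℝ) T := ⟨ht'.1.le, ht'.2⟩
  set den : ℝ := ωstar * α₂ * t' + 1 with hdendef
  have hdenpos : 0 < den := hden t' ht'.1.le
  set W : ℝ := ωstar / den with hWdef
  have hWpos : 0 < W := div_pos hωstar hdenpos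
  set B : ℝ := c * den ^ (-γ) with hBdef
  have hBpos : 0 < B := mul_pos hc (Real.rpow_pos_of_pos hdenpos _)
  have hval : k t' x' = B := by
    have h := hF0
    linarith
  have hmin : ∀ x, k t' x' ≤ k t' x := by
    intro x
    have h := hFnn x
    linarith
  have hloc : IsLocalMin (k t') x' := Filter.Eventually.of_forall hmin
  have hcrit : pdx k t' x' = 0 := hloc.deriv_eq_zero
  -- second derivative sign
  have hktdiff : Differentiable ℝ (k t') := fun y => (pdx_hasDerivAt hk t' y).differentiableAt
  have he : deriv (k t') = fun y => PXd (Function.uncurry k) (t', y) :=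
    funext fun y => pdx_eq' hk t' y
  have hd' : DifferentiableAt ℝ (deriv (k t')) x' := by
    rw [he]
    exact (hasDerivAt_snd' ((contDiff_PXd hk).differentiable (by simp))
      (t := t') (x := x')).differentiableAt
  have hxx : 0 ≤ deriv (deriv (k t')) x' :=
    second_deriv_nonneg_of_isLocalMin hktdiff hd' hloc
  have hD2k : deriv (deriv (k t')) x' = PXd (PXd (Function.uncurry k)) (t', x') :=
    deriv_pdx_eq hk t' x'
  have hxx2 : 0 ≤ PXd (PXd (Function.uncurry k)) (t', x') := hD2k ▸ hxx
  -- PDE at the touching point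
  have heq := eqk t' ht'Icc x'
  rw [diffusion_expand hk hω hk hωne t' x' hcrit, hcrit, mul_zero, add_zero] at heq
  have hq : 0 ≤ k t' x' / ω t' x' := by
    rw [hval]
    exact div_nonneg hBpos.le (hωpos t' x').le
  have h1 : 0 ≤ α₃ * (k t' x' / ω t' x' * PXd (PXd (Function.uncurry k)) (t', x')) := by
    apply mul_nonneg hα₃.le (mul_nonneg hq hxx2)
  have h2 : 0 ≤ α₄ * (k t' x' / ω t' x') * (pdx u t' x') ^ 2 := by
    apply mul_nonneg (mul_nonneg hα₄.le hq) (sq_nonneg _)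
  have hlow : -(B * ω t' x') ≤ pdt k t' x' := by
    rw [hval] at heq h1 h2
    linarith [heq, h1, h2]
  -- ω bound at the touching point, strictly below (1+η) W
  have hωlt : ω t' x' < (1 + η) * W := by
    have hb := hωb t' ht'Icc x'
    have hdle : den ≤ ωstar * α₂ * T + 1 := by
      have : ωstar * α₂ * t' ≤ ωstar * α₂ * T :=
        mul_le_mul_of_nonneg_left ht'.2 (mul_pos hωstar hα₂).le
      rw [hdendef]; linarith
    have hDTpos : 0 < ωstar * α₂ * T + 1 := hden T hT.le
    have hδlt : δ < η * W := by
      rw [hδdef, hWdef]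
      have e : η * ωstar / den = η * (ωstar / den) := by ring
      rw [← e]
      exact div_lt_div_of_pos_left (by positivity) hdenpos (by linarith)
    rw [← hWdef] at hb
    linarith
  have hstrict : -(B * ((1 + η) * W)) < pdt k t' x' := by
    have hmul : B * ω t' x' < B * ((1 + η) * W) := by
      exact mul_lt_mul_of_pos_left hωlt hBpos
    linarith
  -- time derivative upper bound at the touching point
  have hd2 : HasDerivAt (fun s : ℝ => ωstar * α₂ * s + 1) (ωstar * α₂) t' := by
    simpa using ((hasDerivAt_id t').const_mul (ωstar * α₂)).add_const 1
  have hr2 : HasDerivAt (fun s => (ωstar * α₂ * s + 1) ^ (-γ))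
      (ωstar * α₂ * (-γ) * den ^ (-γ - 1)) t' :=
    hd2.rpow_const (Or.inl hdenpos.ne')
  have hB' : HasDerivAt (fun s => k s x' - c * (ωstar * α₂ * s + 1) ^ (-γ))
      (pdt k t' x' - c * (ωstar * α₂ * (-γ) * den ^ (-γ - 1))) t' := by
    refine HasDerivAt.sub ?_ (hr2.const_mul c)
    rw [pdt_eq' hk]
    exact pdt_hasDerivAt hk t' x'
  have h6 : pdt k t' x' - c * (ωstar * α₂ * (-γ) * den ^ (-γ - 1)) ≤ 0 := by
    rw [← hB'.deriv]
    exact hFd'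
  -- identify the barrier derivative
  have hγα : γ * α₂ = 1 + η := by
    rw [hγdef]
    field_simp
  have e1 : den ^ (-γ - 1) = den ^ (-γ) * den⁻¹ := by
    rw [show -γ - 1 = -γ + (-1) by ring, Real.rpow_add hdenpos, Real.rpow_neg_one]
  have e2 : c * (ωstar * α₂ * (-γ) * den ^ (-γ - 1)) = -((1 + η) * W * B) := by
    rw [e1, hWdef, hBdef, div_eq_mul_inv, ← hγα]
    ring
  rw [e2] at h6
  -- contradiction
  rw [show -(B * ((1 + η) * W)) = -((1 + η) * W * B) by ring] at hstrict
  linarith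

end Step3

theorem k_lower_bound
    (ν α₁ α₂ α₃ α₄ T : ℝ) (hν : 0 < ν) (hα₁ : 0 < α₁) (hα₂ : 0 < α₂)
    (hα₃ : 0 < α₃) (hα₄ : 0 < α₄) (hT : 0 < T)
    (u ω k : ℝ → ℝ → ℝ)
    (hsol : IsKolmogorovSolution ν α₁ α₂ α₃ α₄ T u ω k)
    (ωstar : ℝ) (hωstar : 0 < ωstar)
    (hω0 : ∀ x : ℝ, ω 0 x ≤ ωstar)
    (klow : ℝ) (hklow : 0 ≤ klow)
    (hk0 : ∀ x : ℝ, klow ≤ k 0 x) :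
    ∀ t ∈ Icc (0 : ℝ) T, ∀ x : ℝ,
      klow / (ωstar * α₂ * t + 1) ^ (1 / α₂) ≤ k t x ∧ 0 ≤ k t x := by
  obtain ⟨hu, hω, hk, hup, hωp, hkp, hωpos, equ, eqw, eqk⟩ := hsol
  have hknn : ∀ t ∈ Icc (0:ℝ) T, ∀ x : ℝ, 0 ≤ k t x :=
    k_nonneg_aux α₂ α₃ α₄ T hα₃ hT u ω k hu hω hk hup hωp hkp hωpos eqk
      (fun x => le_trans hklow (hk0 x))
  intro t ht x
  refine ⟨?_, hknn t ht x⟩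
  have hA : 0 < ωstar * α₂ * t + 1 := by
    have h1 : 0 ≤ ωstar * α₂ * t := mul_nonneg (mul_pos hωstar hα₂).le ht.1
    linarith
  rcases eq_or_lt_of_le hklow with h0 | hklowpos
  · rw [← h0, zero_div]
    exact hknn t ht x
  · have main : ∀ e ∈ Ioo (0:ℝ) klow,
        (klow - e) * (ωstar * α₂ * t + 1) ^ (-((1 + e) / α₂)) ≤ k t x := by
      intro e he
      have hδ : 0 < e * ωstar / (2 * (ωstar * α₂ * T + 1)) := by
        have hDT : 0 < ωstar * α₂ * T + 1 := by positivity
        exact div_pos (mul_pos he.1 hωstar) (by positivity)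
      have hωb := omega_bound_aux α₁ α₂ T hα₁ hα₂ hT u ω k hω hk hωp hωpos eqw hknn
        ωstar hωstar hω0 _ hδ
      exact k_decay_aux α₂ α₃ α₄ T hα₂ hα₃ hT u ω k hu hω hk hkp hωpos eqk hα₄
        ωstar hωstar (klow - e) (by linarith [he.2]) e he.1 hωb
        (fun y => lt_of_lt_of_le (by linarith [he.1]) (hk0 y)) t ht x
    have hc : ContinuousAt (fun e : ℝ => (ωstar * α₂ * t + 1) ^ (-((1 + e) / α₂))) 0 := by
      apply ContinuousAt.comp (Real.continuousAt_const_rpow hA.ne')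
      exact (((continuous_const.add continuous_id).div_const α₂).neg).continuousAt
    have hmul : ContinuousAt
        (fun e : ℝ => (klow - e) * (ωstar * α₂ * t + 1) ^ (-((1 + e) / α₂))) 0 :=
      ((continuous_const.sub continuous_id).continuousAt).mul hc
    have hval0 : (klow - 0) * (ωstar * α₂ * t + 1) ^ (-((1 + 0) / α₂))
        = klow * (ωstar * α₂ * t + 1) ^ (-(1 / α₂)) := by norm_num
    have hlim : Filter.Tendsto
        (fun e : ℝ => (klow - e) * (ωstar * α₂ * t + 1) ^ (-((1 + e) / α₂)))
        (nhdsWithin 0 (Ioi 0)) (nhds (klow * (ωstar * α₂ * t + 1) ^ (-(1 / α₂)))) := by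
      have h2 := hmul.tendsto.mono_left
        (nhdsWithin_le_nhds : nhdsWithin (0:ℝ) (Ioi 0) ≤ nhds 0)
      rwa [hval0] at h2
    have hfin : klow * (ωstar * α₂ * t + 1) ^ (-(1 / α₂)) ≤ k t x := by
      refine le_of_tendsto hlim ?_
      filter_upwards [Ioo_mem_nhdsGT_of_mem (⟨le_refl (0:ℝ), hklowpos⟩ : (0:ℝ) ∈ Ico 0 klow)]
        with e he
      exact main e he
    rw [Real.rpow_neg hA.le, ← div_eq_mul_inv] at hfin
    exact hfin
end SmoothFamily
end

section
/- Let (u, ω, k) be a classical solution of the one-dimensional Kolmogorov two-equation model on [0,T] with k(t,x) ≥ 0 for all (t,x). Then there exists a constant C > 0, depending only on α₁ and α₂, such that for every t ∈ [0,T]: ‖ω(t)‖²_{L²(Ω)} + α₁ ∫₀ᵗ ∫_Ω (k/ω) |∂ₓω|² dx dτ + α₂ ∫₀ᵗ ∫_Ω ω³ dx dτ ≤ ‖ω(0)‖²_{L²(Ω)} · exp( C ∫₀ᵗ ‖∂ₓu(τ)‖_{L^∞} dτ ). -/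
open MeasureTheory Real Set

section aux
variable {f : ℝ → ℝ → ℝ}

lemma contDiff_sliceX (hf : ContDiff ℝ (⊤ : ℕ∞) (Function.uncurry f)) (t : ℝ) :
    ContDiff ℝ (⊤ : ℕ∞) (fun y => f t y) :=
  hf.comp (contDiff_const.prodMk contDiff_id)

lemma contDiff_sliceT (hf : ContDiff ℝ (⊤ : ℕ∞) (Function.uncurry f)) (x : ℝ) :
    ContDiff ℝ (⊤ : ℕ∞) (fun s => f s x) :=
  hf.comp (contDiff_id.prodMk contDiff_const)

lemma hasDerivAt_pdx (hf : ContDiff ℝ (⊤ : ℕ∞) (Function.uncurry f)) (t x : ℝ) :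
    HasDerivAt (fun y => f t y) (pdx f t x) x :=
  (((contDiff_sliceX hf t).differentiable (by simp)) x).hasDerivAt

lemma hasDerivAt_pdt (hf : ContDiff ℝ (⊤ : ℕ∞) (Function.uncurry f)) (t x : ℝ) :
    HasDerivAt (fun s => f s x) (pdt f t x) t :=
  (((contDiff_sliceT hf x).differentiable (by simp)) t).hasDerivAt

lemma contDiff_pdx (hf : ContDiff ℝ (⊤ : ℕ∞) (Function.uncurry f)) :
    ContDiff ℝ (⊤ : ℕ∞) (Function.uncurry (pdx f)) := by
  have h : Function.uncurry (pdx f)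
      = fun p : ℝ × ℝ => fderiv ℝ (Function.uncurry f) p ((0 : ℝ), (1 : ℝ)) := by
    funext p
    have hF : HasFDerivAt (Function.uncurry f) (fderiv ℝ (Function.uncurry f) (p.1, p.2))
        (p.1, p.2) := ((hf.differentiable (by simp)) (p.1, p.2)).hasFDerivAt
    have hg : HasDerivAt (fun y : ℝ => ((p.1 : ℝ), y)) ((0 : ℝ), (1 : ℝ)) p.2 :=
      (hasDerivAt_const _ _).prodMk (hasDerivAt_id _)
    have := hF.comp_hasDerivAt p.2 hg
    simpa [Function.uncurry, pdx, pdt, Function.comp_def] using this.deriv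
  rw [h]
  exact (ContinuousLinearMap.apply ℝ ℝ ((0 : ℝ), (1 : ℝ))).contDiff.comp
    (hf.fderiv_right (by exact_mod_cast le_top))

lemma contDiff_pdt (hf : ContDiff ℝ (⊤ : ℕ∞) (Function.uncurry f)) :
    ContDiff ℝ (⊤ : ℕ∞) (Function.uncurry (pdt f)) := by
  have h : Function.uncurry (pdt f)
      = fun p : ℝ × ℝ => fderiv ℝ (Function.uncurry f) p ((1 : ℝ), (0 : ℝ)) := by
    funext p
    have hF : HasFDerivAt (Function.uncurry f) (fderiv ℝ (Function.uncurry f) (p.1, p.2))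
        (p.1, p.2) := ((hf.differentiable (by simp)) (p.1, p.2)).hasFDerivAt
    have hg : HasDerivAt (fun s : ℝ => (s, (p.2 : ℝ))) ((1 : ℝ), (0 : ℝ)) p.1 :=
      (hasDerivAt_id _).prodMk (hasDerivAt_const _ _)
    have := hF.comp_hasDerivAt p.1 hg
    simpa [Function.uncurry, pdx, pdt, Function.comp_def] using this.deriv
  rw [h]
  exact (ContinuousLinearMap.apply ℝ ℝ ((1 : ℝ), (0 : ℝ))).contDiff.comp
    (hf.fderiv_right (by exact_mod_cast le_top))

lemma periodic_pdx (hf : ∀ t, Function.Periodic (f t) (2 * π)) (t x : ℝ) :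
    pdx f t (x + 2 * π) = pdx f t x := by
  unfold pdx
  have h : (fun y => f t (y + 2 * π)) = fun y => f t y := funext fun y => hf t y
  have h2 : deriv (fun y => f t y) (x + 2 * π) = deriv (fun y => f t (y + 2 * π)) x :=
    (deriv_comp_add_const _ _ _).symm
  rw [h2, h]

end aux

lemma abs_le_supNorm {g : ℝ → ℝ} (hc : Continuous g) {x : ℝ} (hx : x ∈ Icc (-π) π) :
    |g x| ≤ supNorm g :=
  le_csSup ((isCompact_Icc.image (continuous_abs.comp hc)).bddAbove) ⟨x, hx, rfl⟩

lemma supNorm_nonneg {g : ℝ → ℝ} (hc : Continuous g) : 0 ≤ supNorm g :=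
  le_trans (abs_nonneg _) (abs_le_supNorm hc ⟨neg_nonpos.mpr pi_pos.le, pi_pos.le⟩)

lemma continuous_supNorm {h : ℝ → ℝ → ℝ} (hh : Continuous (Function.uncurry h)) :
    Continuous fun t => supNorm (h t) := by
  refine continuous_iff_continuousAt.mpr fun t₀ => ?_
  rw [Metric.continuousAt_iff]
  intro ε hε
  set K : Set (ℝ × ℝ) := Icc (t₀ - 1) (t₀ + 1) ×ˢ Icc (-π) π with hK
  have hKc : IsCompact K := isCompact_Icc.prod isCompact_Icc
  have hH : UniformContinuousOn (fun p : ℝ × ℝ => |Function.uncurry h p|) K :=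
    hKc.uniformContinuousOn_of_continuous (hh.abs.continuousOn)
  rw [Metric.uniformContinuousOn_iff] at hH
  obtain ⟨δ, hδ, hδ'⟩ := hH (ε / 2) (by linarith)
  refine ⟨min (δ / 2) 1, by positivity, fun {t} ht => ?_⟩
  have key : ∀ s s' : ℝ, dist s t₀ < min (δ / 2) 1 → dist s' t₀ < min (δ / 2) 1 →
      supNorm (h s) ≤ supNorm (h s') + ε / 2 := by
    intro s s' hs hs'
    have hs1 : |s - t₀| < 1 :=
      lt_of_lt_of_le (by simpa [Real.dist_eq] using hs) (min_le_right _ _)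
    have hs'1 : |s' - t₀| < 1 :=
      lt_of_lt_of_le (by simpa [Real.dist_eq] using hs') (min_le_right _ _)
    obtain ⟨hs1a, hs1b⟩ := abs_lt.mp hs1
    obtain ⟨hs'1a, hs'1b⟩ := abs_lt.mp hs'1
    have hne : ((fun x => |h s x|) '' Icc (-π) π).Nonempty :=
      ⟨|h s (-π)|, ⟨-π, ⟨le_refl _, by linarith [pi_pos]⟩, rfl⟩⟩
    refine csSup_le hne ?_
    rintro y ⟨x, hx, rfl⟩
    have hsK : (s, x) ∈ K := ⟨⟨by linarith, by linarith⟩, hx⟩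
    have hs'K : (s', x) ∈ K := ⟨⟨by linarith, by linarith⟩, hx⟩
    have hd : dist ((s : ℝ), x) ((s' : ℝ), x) < δ := by
      rw [Prod.dist_eq]
      simp only [dist_self]
      rw [max_eq_left dist_nonneg]
      have h1 : dist s s' ≤ dist s t₀ + dist s' t₀ := dist_triangle_right _ _ _
      have h2 : dist s t₀ < δ / 2 := lt_of_lt_of_le hs (min_le_left _ _)
      have h3 : dist s' t₀ < δ / 2 := lt_of_lt_of_le hs' (min_le_left _ _)
      linarith
    have hclose := hδ' _ hsK _ hs'K hd
    rw [Real.dist_eq] at hclose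
    obtain ⟨hc1, hc2⟩ := abs_lt.mp hclose
    simp only [Function.uncurry] at hc1 hc2
    have hcont : Continuous fun x => h s' x :=
      hh.comp (continuous_const.prodMk continuous_id)
    have := abs_le_supNorm hcont hx
    simp only []
    linarith
  have ht₀ : dist t₀ t₀ < min (δ / 2) 1 := by
    rw [dist_self]; positivity
  have k1 := key t t₀ ht ht₀
  have k2 := key t₀ t ht₀ ht
  rw [Real.dist_eq, abs_lt]
  constructor <;> linarith
theorem omega_energy_estimate
    (ν α₁ α₂ α₃ α₄ T : ℝ) (hν : 0 < ν) (hα₁ : 0 < α₁) (hα₂ : 0 < α₂)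
    (hα₃ : 0 < α₃) (hα₄ : 0 < α₄) (hT : 0 < T)
    (u ω k : ℝ → ℝ → ℝ)
    (hsol : IsKolmogorovSolution ν α₁ α₂ α₃ α₄ T u ω k)
    (hk : ∀ t ∈ Icc (0 : ℝ) T, ∀ x : ℝ, 0 ≤ k t x) :
    ∃ C : ℝ, 0 < C ∧ ∀ t ∈ Icc (0 : ℝ) T,
      (∫ x in (-π)..π, (ω t x) ^ 2)
        + α₁ * (∫ τ in (0 : ℝ)..t, ∫ x in (-π)..π, (k τ x / ω τ x) * (pdx ω τ x) ^ 2)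
        + α₂ * ∫ τ in (0 : ℝ)..t, ∫ x in (-π)..π, (ω τ x) ^ 3
      ≤ (∫ x in (-π)..π, (ω 0 x) ^ 2)
          * Real.exp (C * ∫ τ in (0 : ℝ)..t, supNorm (fun x => pdx u τ x)) := by
  obtain ⟨hu, hω, hk', hup, hωp, hkp, hωpos, -, eqω, -⟩ := hsol
  have hππ : (-π : ℝ) ≤ π := by linarith [pi_pos]
  -- continuity facts
  have hωcont : Continuous (Function.uncurry ω) := hω.continuous
  have hucont : Continuous (Function.uncurry u) := hu.continuous
  have hkcont : Continuous (Function.uncurry k) := hk'.continuous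
  have hpdxω : ContDiff ℝ (⊤ : ℕ∞) (Function.uncurry (pdx ω)) := contDiff_pdx hω
  have hpdtω : ContDiff ℝ (⊤ : ℕ∞) (Function.uncurry (pdt ω)) := contDiff_pdt hω
  have hpdxu : ContDiff ℝ (⊤ : ℕ∞) (Function.uncurry (pdx u)) := contDiff_pdx hu
  -- the spatial flux term for ω
  set P : ℝ → ℝ → ℝ := fun t y => k t y / ω t y * pdx ω t y with hP
  set Q : ℝ → ℝ → ℝ := fun t x => deriv (fun y => P t y) x with hQ
  have hPt : ∀ t, ContDiff ℝ (⊤ : ℕ∞) (fun y => P t y) := fun t =>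
    ((contDiff_sliceX hk' t).div (contDiff_sliceX hω t)
      (fun y => (hωpos t y).ne')).mul (contDiff_sliceX hpdxω t)
  have hQc : ∀ t, Continuous (fun x => Q t x) := fun t =>
    (hPt t).continuous_deriv (by exact_mod_cast le_top)
  have hQd : ∀ t x, HasDerivAt (fun y => P t y) (Q t x) x := fun t x =>
    (((hPt t).differentiable (by simp)) x).hasDerivAt
  -- the scalar functions
  set E : ℝ → ℝ := fun t => ∫ x in (-π)..π, (ω t x) ^ 2 with hE
  set S : ℝ → ℝ := fun t => ∫ x in (-π)..π, pdx u t x * (ω t x) ^ 2 with hS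
  set a : ℝ → ℝ := fun t => ∫ x in (-π)..π, (k t x / ω t x) * (pdx ω t x) ^ 2 with ha
  set b : ℝ → ℝ := fun t => ∫ x in (-π)..π, (ω t x) ^ 3 with hb
  set g : ℝ → ℝ := fun t => supNorm (fun x => pdx u t x) with hg
  set A : ℝ → ℝ := fun t => ∫ τ in (0 : ℝ)..t, a τ with hA
  set B : ℝ → ℝ := fun t => ∫ τ in (0 : ℝ)..t, b τ with hB
  set I : ℝ → ℝ := fun t => ∫ τ in (0 : ℝ)..t, g τ with hI
  set F : ℝ → ℝ := fun t => E t + α₁ * A t + α₂ * B t with hF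
  set G : ℝ → ℝ := fun t => F t * Real.exp (-(I t)) with hG
  -- continuity of the slices
  have hslω : ∀ t, Continuous (fun x => ω t x) := fun t => (contDiff_sliceX hω t).continuous
  have hslu : ∀ t, Continuous (fun x => u t x) := fun t => (contDiff_sliceX hu t).continuous
  have hslk : ∀ t, Continuous (fun x => k t x) := fun t => (contDiff_sliceX hk' t).continuous
  have hslωx : ∀ t, Continuous (fun x => pdx ω t x) := fun t =>
    (contDiff_sliceX hpdxω t).continuous
  have hslωt : ∀ t, Continuous (fun x => pdt ω t x) := fun t =>
    (contDiff_sliceX hpdtω t).continuous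
  have hslux : ∀ t, Continuous (fun x => pdx u t x) := fun t =>
    (contDiff_sliceX hpdxu t).continuous
  -- continuity of a, b, g
  have ha_cont : Continuous a := by
    apply intervalIntegral.continuous_parametric_intervalIntegral_of_continuous'
    exact (hkcont.div hωcont (fun p => (hωpos p.1 p.2).ne')).mul
      ((hpdxω.continuous).pow 2)
  have hb_cont : Continuous b := by
    apply intervalIntegral.continuous_parametric_intervalIntegral_of_continuous'
    exact hωcont.pow 3
  have hg_cont : Continuous g := continuous_supNorm hpdxu.continuous
  -- derivative of E
  have hE' : ∀ t₀ : ℝ, HasDerivAt E (∫ x in (-π)..π, 2 * ω t₀ x * pdt ω t₀ x) t₀ := by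
    intro t₀
    set K : Set (ℝ × ℝ) := Icc (t₀ - 1) (t₀ + 1) ×ˢ Icc (-π) π with hK
    have hKc : IsCompact K := isCompact_Icc.prod isCompact_Icc
    have hφ : Continuous fun p : ℝ × ℝ => 2 * ω p.1 p.2 * pdt ω p.1 p.2 :=
      (continuous_const.mul hωcont).mul hpdtω.continuous
    obtain ⟨M, hM⟩ := hKc.exists_bound_of_continuousOn hφ.continuousOn
    have key := (intervalIntegral.hasDerivAt_integral_of_dominated_loc_of_deriv_le
      (F := fun s x => (ω s x) ^ 2) (F' := fun s x => 2 * ω s x * pdt ω s x)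
      (x₀ := t₀) (a := -π) (b := π) (bound := fun _ => M) (s := Metric.ball t₀ 1) (μ := volume) (Metric.ball_mem_nhds t₀ one_pos)
      (Filter.Eventually.of_forall fun s =>
        (((hslω s).pow 2).aestronglyMeasurable))
      (((hslω t₀).pow 2).intervalIntegrable _ _)
      (((continuous_const.mul (hslω t₀)).mul (hslωt t₀)).aestronglyMeasurable)
      ?_ (intervalIntegrable_const) ?_)
    · exact key.2
    · refine Filter.Eventually.of_forall fun x hx s hs => ?_
      have hxI : x ∈ Icc (-π) π := by
        rw [uIoc_of_le hππ] at hx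
        exact Ioc_subset_Icc_self hx
      have hsI : s ∈ Icc (t₀ - 1) (t₀ + 1) := by
        rw [Metric.mem_ball, Real.dist_eq] at hs
        obtain ⟨h1, h2⟩ := abs_lt.mp hs
        exact ⟨by linarith, by linarith⟩
      exact hM (s, x) ⟨hsI, hxI⟩
    · refine Filter.Eventually.of_forall fun x _ s _ => ?_
      simpa using (hasDerivAt_pdt hω s x).fun_pow 2
  -- derivatives of A, B, I
  have hAd : ∀ t, HasDerivAt A (a t) t := fun t =>
    intervalIntegral.integral_hasDerivAt_right (ha_cont.intervalIntegrable _ _)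
      (ha_cont.stronglyMeasurableAtFilter volume (nhds t)) ha_cont.continuousAt
  have hBd : ∀ t, HasDerivAt B (b t) t := fun t =>
    intervalIntegral.integral_hasDerivAt_right (hb_cont.intervalIntegrable _ _)
      (hb_cont.stronglyMeasurableAtFilter volume (nhds t)) hb_cont.continuousAt
  have hId : ∀ t, HasDerivAt I (g t) t := fun t =>
    intervalIntegral.integral_hasDerivAt_right (hg_cont.intervalIntegrable _ _)
      (hg_cont.stronglyMeasurableAtFilter volume (nhds t)) hg_cont.continuousAt
  -- periodicity consequences at the endpoints
  have hπeq : (-π : ℝ) + 2 * π = π := by ring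
  have hωend : ∀ t, ω t π = ω t (-π) := fun t => by
    have := hωp t (-π); rwa [hπeq] at this
  have huend : ∀ t, u t π = u t (-π) := fun t => by
    have := hup t (-π); rwa [hπeq] at this
  have hkend : ∀ t, k t π = k t (-π) := fun t => by
    have := hkp t (-π); rwa [hπeq] at this
  have hωxend : ∀ t, pdx ω t π = pdx ω t (-π) := fun t => by
    have := periodic_pdx hωp t (-π); rwa [hπeq] at this
  -- the key differential identity
  have keyIdent : ∀ t ∈ Icc (0 : ℝ) T,
      (∫ x in (-π)..π, 2 * ω t x * pdt ω t x)
        = S t - 2 * α₁ * a t - 2 * α₂ * b t := by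
    intro t ht
    have hcongr : (∫ x in (-π)..π, 2 * ω t x * pdt ω t x)
        = ∫ x in (-π)..π,
            (2 * α₁ * (ω t x * Q t x) - u t x * (2 * ω t x * pdx ω t x)
              - 2 * α₂ * (ω t x) ^ 3) := by
      refine intervalIntegral.integral_congr fun x _ => ?_
      have he := eqω t ht x
      have hp : pdt ω t x = α₁ * Q t x - u t x * pdx ω t x - α₂ * (ω t x) ^ 2 := by
        simp only [hQ, hP]; linarith
      rw [hp]; ring
    have hi1 : IntervalIntegrable (fun x => 2 * α₁ * (ω t x * Q t x)) volume (-π) π :=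
      ((continuous_const.mul ((hslω t).mul (hQc t)))).intervalIntegrable _ _
    have hi2 : IntervalIntegrable (fun x => u t x * (2 * ω t x * pdx ω t x)) volume (-π) π :=
      ((hslu t).mul ((continuous_const.mul (hslω t)).mul (hslωx t))).intervalIntegrable _ _
    have hi3 : IntervalIntegrable (fun x => 2 * α₂ * (ω t x) ^ 3) volume (-π) π :=
      (continuous_const.mul ((hslω t).pow 3)).intervalIntegrable _ _
    rw [hcongr, intervalIntegral.integral_sub (hi1.sub hi2) hi3,
      intervalIntegral.integral_sub hi1 hi2]
    -- IBP for the flux term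
    have ibp2 : (∫ x in (-π)..π, ω t x * Q t x)
        = ω t π * P t π - ω t (-π) * P t (-π) - ∫ x in (-π)..π, pdx ω t x * P t x := by
      refine intervalIntegral.integral_mul_deriv_eq_deriv_mul
        (fun x _ => hasDerivAt_pdx hω t x) (fun x _ => hQd t x)
        ((hslωx t).intervalIntegrable _ _) ((hQc t).intervalIntegrable _ _)
    have hPend : P t π = P t (-π) := by
      simp only [hP, hωend t, hkend t, hωxend t]
    have ibp2' : (∫ x in (-π)..π, ω t x * Q t x) = -a t := by
      rw [ibp2, hPend, hωend t]
      have : (∫ x in (-π)..π, pdx ω t x * P t x) = a t := by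
        refine intervalIntegral.integral_congr fun x _ => ?_
        simp only [hP]; ring
      rw [this]; ring
    -- IBP for the transport term
    have hv' : ∀ x : ℝ, HasDerivAt (fun y => (ω t y) ^ 2) (2 * ω t x * pdx ω t x) x := by
      intro x
      simpa using (hasDerivAt_pdx hω t x).fun_pow 2
    have ibp1 : (∫ x in (-π)..π, u t x * (2 * ω t x * pdx ω t x))
        = u t π * (ω t π) ^ 2 - u t (-π) * (ω t (-π)) ^ 2
          - ∫ x in (-π)..π, pdx u t x * (ω t x) ^ 2 := by
      refine intervalIntegral.integral_mul_deriv_eq_deriv_mul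
        (fun x _ => hasDerivAt_pdx hu t x) (fun x _ => hv' x)
        ((hslux t).intervalIntegrable _ _)
        (((continuous_const.mul (hslω t)).mul (hslωx t)).intervalIntegrable _ _)
    have ibp1' : (∫ x in (-π)..π, u t x * (2 * ω t x * pdx ω t x)) = -S t := by
      rw [ibp1, huend t, hωend t, hS]; ring
    rw [intervalIntegral.integral_const_mul, intervalIntegral.integral_const_mul,
      ibp2', ibp1']
    simp only [hb]
    ring
  -- nonnegativity facts
  have ha_nonneg : ∀ t ∈ Icc (0 : ℝ) T, 0 ≤ a t := by
    intro t ht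
    refine intervalIntegral.integral_nonneg hππ fun x _ => ?_
    exact mul_nonneg (div_nonneg (hk t ht x) (hωpos t x).le) (sq_nonneg _)
  have hb_nonneg : ∀ t, 0 ≤ b t := by
    intro t
    refine intervalIntegral.integral_nonneg hππ fun x _ => ?_
    exact pow_nonneg (hωpos t x).le 3
  have hg_nonneg : ∀ t, 0 ≤ g t := fun t => supNorm_nonneg (hslux t)
  have hA_nonneg : ∀ t ∈ Icc (0 : ℝ) T, 0 ≤ A t := by
    intro t ht
    refine intervalIntegral.integral_nonneg ht.1 fun τ hτ => ?_
    exact ha_nonneg τ ⟨hτ.1, hτ.2.trans ht.2⟩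
  have hB_nonneg : ∀ t ∈ Icc (0 : ℝ) T, 0 ≤ B t := by
    intro t ht
    exact intervalIntegral.integral_nonneg ht.1 fun τ _ => hb_nonneg τ
  have hE_nonneg : ∀ t, 0 ≤ E t := by
    intro t
    refine intervalIntegral.integral_nonneg hππ fun x _ => ?_
    positivity
  -- the bound S t ≤ g t * E t
  have hSle : ∀ t, S t ≤ g t * E t := by
    intro t
    have h1 : S t ≤ ∫ x in (-π)..π, g t * (ω t x) ^ 2 := by
      refine intervalIntegral.integral_mono_on hππ
        (((hslux t).mul ((hslω t).pow 2)).intervalIntegrable _ _)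
        ((continuous_const.mul ((hslω t).pow 2)).intervalIntegrable _ _)
        (fun x hx => ?_)
      have h2 : pdx u t x ≤ g t :=
        (le_abs_self _).trans (abs_le_supNorm (hslux t) hx)
      exact mul_le_mul_of_nonneg_right h2 (sq_nonneg _)
    rwa [intervalIntegral.integral_const_mul] at h1
  -- derivative of G and monotonicity
  have hFd : ∀ t, HasDerivAt F
      ((∫ x in (-π)..π, 2 * ω t x * pdt ω t x) + α₁ * a t + α₂ * b t) t := by
    intro t
    exact ((hE' t).add ((hAd t).const_mul α₁)).add ((hBd t).const_mul α₂)
  have hGd : ∀ t, HasDerivAt G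
      (((∫ x in (-π)..π, 2 * ω t x * pdt ω t x) + α₁ * a t + α₂ * b t)
          * Real.exp (-(I t)) + F t * (Real.exp (-(I t)) * -(g t))) t := by
    intro t
    exact (hFd t).mul ((hId t).neg.exp)
  have hGanti : AntitoneOn G (Icc 0 T) := by
    refine antitoneOn_of_deriv_nonpos (convex_Icc 0 T)
      (fun t _ => ((hGd t).continuousAt).continuousWithinAt)
      (fun t ht => ((hGd t).differentiableAt).differentiableWithinAt) ?_
    intro t ht
    rw [interior_Icc] at ht
    have htI : t ∈ Icc (0 : ℝ) T := Ioo_subset_Icc_self ht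
    rw [(hGd t).deriv]
    have hkey := keyIdent t htI
    rw [hkey]
    have hFle : S t - 2 * α₁ * a t - 2 * α₂ * b t + α₁ * a t + α₂ * b t
        ≤ g t * F t := by
      have h1 : S t ≤ g t * E t := hSle t
      have h2 : g t * E t ≤ g t * F t := by
        apply mul_le_mul_of_nonneg_left _ (hg_nonneg t)
        simp only [hF]
        nlinarith [hA_nonneg t htI, hB_nonneg t htI, hα₁.le, hα₂.le,
          mul_nonneg hα₁.le (hA_nonneg t htI), mul_nonneg hα₂.le (hB_nonneg t htI)]
      nlinarith [ha_nonneg t htI, hb_nonneg t, hα₁.le, hα₂.le,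
        mul_nonneg hα₁.le (ha_nonneg t htI), mul_nonneg hα₂.le (hb_nonneg t)]
    have hexp : (0 : ℝ) < Real.exp (-(I t)) := Real.exp_pos _
    nlinarith [hFle, hexp]
  -- conclude
  refine ⟨1, one_pos, fun t ht => ?_⟩
  have h0mem : (0 : ℝ) ∈ Icc (0 : ℝ) T := ⟨le_refl _, hT.le⟩
  have hGt := hGanti h0mem ht ht.1
  have hG0 : G 0 = E 0 := by
    simp only [hG, hF, hA, hB, hI, intervalIntegral.integral_same, mul_zero,
      add_zero, neg_zero, Real.exp_zero, mul_one]
  rw [hG0] at hGt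
  have hmul := mul_le_mul_of_nonneg_right hGt (Real.exp_nonneg (I t))
  rw [hG] at hmul
  simp only at hmul
  rw [mul_assoc, ← Real.exp_add, neg_add_cancel, Real.exp_zero, mul_one] at hmul
  have final : F t ≤ E 0 * Real.exp (1 * I t) := by
    rwa [one_mul]
  exact final
end

section
/- Let T > 0, let a : [0,T] → ℝ be a continuous function with a(t) ≥ 0 for all t ∈ [0,T], and let ξ : [0,T] → ℝ be a differentiable function satisfying ξ'(t) = −ξ(t)² + a(t)ξ(t) for all t ∈ [0,T] and ξ(0) < 0. Then for every t ∈ [0,T] one has ξ(t) ≤ ξ(0)/(1 + ξ(0) t) = −|ξ(0)|/(1 − |ξ(0)| t); in particular, necessarily T < 1/|ξ(0)|. -/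
open Set

theorem ode_riccati_blow_up (T : ℝ) (hT : 0 < T) (a ξ : ℝ → ℝ)
    (ha_cont : ContinuousOn a (Icc 0 T))
    (ha_nonneg : ∀ t ∈ Icc (0 : ℝ) T, 0 ≤ a t)
    (hξ : ∀ t ∈ Icc (0 : ℝ) T, HasDerivAt ξ (-(ξ t) ^ 2 + a t * ξ t) t)
    (hξ0 : ξ 0 < 0) :
    (∀ t ∈ Icc (0 : ℝ) T,
        ξ t ≤ ξ 0 / (1 + ξ 0 * t) ∧ ξ 0 / (1 + ξ 0 * t) = -|ξ 0| / (1 - |ξ 0| * t)) ∧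
      T < 1 / |ξ 0| := by
  have hξc : ContinuousOn ξ (Icc 0 T) := fun t ht =>
    (hξ t ht).continuousAt.continuousWithinAt
  -- bound on |a - ξ|
  obtain ⟨L, hL⟩ := (isCompact_Icc (a := (0:ℝ)) (b := T)).exists_bound_of_continuousOn
    (ha_cont.sub hξc)
  -- ξ stays negative
  have hneg : ∀ t ∈ Icc (0 : ℝ) T, ξ t < 0 := by
    by_contra h
    push_neg at h
    obtain ⟨t1, ht1, ht1'⟩ := h
    -- find a zero of ξ in [0, t1]
    have h01 : Icc (0:ℝ) t1 ⊆ Icc 0 T := Icc_subset_Icc le_rfl ht1.2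
    obtain ⟨t0, ht0, hz⟩ : ∃ t0 ∈ Icc (0:ℝ) t1, ξ t0 = 0 := by
      have := intermediate_value_Icc ht1.1 (hξc.mono h01)
      exact this ⟨hξ0.le, ht1'⟩
    have ht0T : t0 ∈ Icc (0:ℝ) T := h01 ht0
    -- time-reversed function
    set g : ℝ → ℝ := fun s => ξ (t0 - s) with hg
    have hmem : ∀ s ∈ Icc (0:ℝ) t0, t0 - s ∈ Icc (0:ℝ) T := fun s hs =>
      ⟨by linarith [hs.2], by linarith [hs.1, ht0T.2]⟩
    have hgd : ∀ s ∈ Icc (0:ℝ) t0,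
        HasDerivAt g (-(-(ξ (t0 - s)) ^ 2 + a (t0 - s) * ξ (t0 - s))) s := by
      intro s hs
      have h1 : HasDerivAt (fun s : ℝ => t0 - s) (-1) s := by
        simpa using (hasDerivAt_id s).const_sub t0
      have := (hξ _ (hmem s hs)).comp s h1
      exact this.congr_deriv (by ring)
    have hgc : ContinuousOn g (Icc 0 t0) := fun s hs =>
      ((hgd s hs).continuousAt).continuousWithinAt
    have key := norm_le_gronwallBound_of_norm_deriv_right_le (δ := 0) (ε := 0)
      (K := L) hgc
      (fun x hx => ((hgd x (Ico_subset_Icc_self hx)).hasDerivWithinAt))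
      (by simp [hg, hz])
      (fun x hx => by
        have hxI : t0 - x ∈ Icc (0:ℝ) T := hmem x (Ico_subset_Icc_self hx)
        have hb := hL (t0 - x) hxI
        have : ‖-(-(ξ (t0 - x)) ^ 2 + a (t0 - x) * ξ (t0 - x))‖
            = ‖a (t0 - x) - ξ (t0 - x)‖ * ‖ξ (t0 - x)‖ := by
          rw [norm_sub_rev, ← norm_mul]
          congr 1
          ring
        rw [this, add_zero]
        exact mul_le_mul_of_nonneg_right hb (norm_nonneg _))
      t0 ⟨ht0.1, le_rfl⟩
    rw [gronwallBound_ε0_δ0] at key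
    have : ξ 0 = 0 := by
      have := le_antisymm key (norm_nonneg _)
      simpa [hg] using this
    exact absurd this hξ0.ne
  -- monotone function u = 1/ξ - t
  set u : ℝ → ℝ := fun t => (ξ t)⁻¹ - t with hu
  have hud : ∀ t ∈ Icc (0:ℝ) T, HasDerivAt u (-(a t) / ξ t) t := by
    intro t ht
    have hξne : ξ t ≠ 0 := (hneg t ht).ne
    have h1 : HasDerivAt (fun t => (ξ t)⁻¹)
        (-(-(ξ t) ^ 2 + a t * ξ t) / ξ t ^ 2) t := (hξ t ht).inv hξne
    have := h1.sub (hasDerivAt_id t)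
    refine this.congr_deriv ?_
    field_simp
    ring
  have humono : MonotoneOn u (Icc 0 T) := by
    apply monotoneOn_of_deriv_nonneg (convex_Icc 0 T)
    · exact fun t ht => ((hud t ht).continuousAt).continuousWithinAt
    · intro t ht
      rw [interior_Icc] at ht
      exact ((hud t (Ioo_subset_Icc_self ht)).differentiableAt).differentiableWithinAt
    · intro t ht
      rw [interior_Icc] at ht
      have htI := Ioo_subset_Icc_self ht
      rw [(hud t htI).deriv]
      have h1 := ha_nonneg t htI
      have h2 := hneg t htI
      rw [neg_div, neg_nonneg, div_nonpos_iff]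
      left
      exact ⟨h1, h2.le⟩
  have h0I : (0:ℝ) ∈ Icc (0:ℝ) T := ⟨le_rfl, hT.le⟩
  have key : ∀ t ∈ Icc (0:ℝ) T, (ξ 0)⁻¹ + t ≤ (ξ t)⁻¹ := by
    intro t ht
    have := humono h0I ht ht.1
    simp only [hu] at this
    linarith
  have habs : |ξ 0| = -ξ 0 := abs_of_neg hξ0
  constructor
  · intro t ht
    have hξt := hneg t ht
    have hk := key t ht
    have hinvneg : (ξ t)⁻¹ < 0 := inv_neg''.mpr hξt
    have hcneg : (ξ 0)⁻¹ + t < 0 := lt_of_le_of_lt hk hinvneg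
    constructor
    · have h1 : ξ t ≤ ((ξ 0)⁻¹ + t)⁻¹ := by
        have := one_div_le_one_div_of_le (by linarith : (0:ℝ) < -(ξ t)⁻¹) (by linarith : -(ξ t)⁻¹ ≤ -((ξ 0)⁻¹ + t))
        rw [one_div, one_div] at this
        have h2 : (-((ξ 0)⁻¹ + t))⁻¹ ≤ (-(ξ t)⁻¹)⁻¹ := this
        rw [inv_neg, inv_neg, neg_le_neg_iff, inv_inv] at h2
        exact h2
      have hc : 1 + ξ 0 * t = ξ 0 * ((ξ 0)⁻¹ + t) := by
        rw [mul_add, mul_inv_cancel₀ hξ0.ne]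
      have heq : ξ 0 / (1 + ξ 0 * t) = ((ξ 0)⁻¹ + t)⁻¹ := by
        rw [hc, div_mul_cancel_left₀ hξ0.ne]
      rwa [heq]
    · rw [habs]; ring_nf
  · have hk := key T ⟨hT.le, le_rfl⟩
    have hinvneg : (ξ T)⁻¹ < 0 := inv_neg''.mpr (hneg T ⟨hT.le, le_rfl⟩)
    have hcneg : (ξ 0)⁻¹ + T < 0 := lt_of_le_of_lt hk hinvneg
    rw [habs]
    rw [lt_div_iff₀ (by linarith)]
    have hinv0 : (ξ 0)⁻¹ < 0 := inv_neg''.mpr hξ0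
    have : T < -(ξ 0)⁻¹ := by linarith
    calc T * -ξ 0 < -(ξ 0)⁻¹ * -ξ 0 := by
          apply mul_lt_mul_of_pos_right this (by linarith)
      _ = 1 := by rw [neg_mul_neg, inv_mul_cancel₀ hξ0.ne]
end

section
/- Let (u, ω, k) be a classical solution of the one-dimensional Kolmogorov two-equation model on [0,T] with k(t,x) ≥ 0 for all (t,x). Assume in addition that for every t ∈ [0,T]: the function x ↦ u(t,x) is odd, the functions x ↦ ω(t,x) and x ↦ k(t,x) are even, and k(t,0) = 0. If ∂ₓu(0,0) < 0, then for every t ∈ [0,T] one has ∂ₓu(t,0) ≤ ∂ₓu(0,0)/(1 + ∂ₓu(0,0) t); consequently T < 1/|∂ₓu(0,0)|, i.e. the solution cannot remain smooth up to time 1/|∂ₓu(0,0)|. -/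
open MeasureTheory Real Set

section Helpers

open Filter Topology


lemma one_le_inftyC : ((⊤:ℕ∞) : WithTop ℕ∞) ≠ 0 := by simp

/-- derivative of an even differentiable function at 0 vanishes -/
lemma deriv_even_zero (g : ℝ → ℝ) (hg : Differentiable ℝ g) (he : ∀ y, g (-y) = g y) :
    deriv g 0 = 0 := by
  have hneg : HasDerivAt (fun y : ℝ => -y) (-1) 0 := (hasDerivAt_id (0:ℝ)).neg
  have h0 : HasDerivAt g (deriv g 0) (-(0:ℝ)) := by
    rw [neg_zero]; exact (hg 0).hasDerivAt
  have h1 := h0.comp (0:ℝ) hneg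
  have h2 : (g ∘ fun y : ℝ => -y) = g := funext fun y => he y
  rw [h2] at h1
  have := h1.deriv
  linarith

lemma snd_deriv_nonneg (g : ℝ → ℝ) (hg : ContDiff ℝ (⊤:ℕ∞) g) (h0 : g 0 = 0)
    (h1 : deriv g 0 = 0) (hnn : ∀ y, 0 ≤ g y) : 0 ≤ deriv (deriv g) 0 := by
  by_contra hcon
  push_neg at hcon
  have hg' : Differentiable ℝ (deriv g) :=
    ((contDiff_infty_iff_deriv.mp hg).2).differentiable one_le_inftyC
  have hd : HasDerivAt (deriv g) (deriv (deriv g) 0) 0 := (hg' 0).hasDerivAt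
  have hslope := hasDerivAt_iff_tendsto_slope.mp hd
  have hslope' : Tendsto (slope (deriv g) 0) (𝓝[>] (0:ℝ)) (𝓝 (deriv (deriv g) 0)) :=
    hslope.mono_left (nhdsWithin_mono 0 (fun x hx => ne_of_gt hx))
  have hev : ∀ᶠ x in 𝓝[>] (0:ℝ), slope (deriv g) 0 x < 0 :=
    hslope'.eventually_lt_const hcon
  rw [Filter.eventually_iff, mem_nhdsGT_iff_exists_Ioo_subset] at hev
  obtain ⟨δ, hδ, hsub⟩ := hev
  have hδ0 : 0 < δ := hδ
  have hderivneg : ∀ x ∈ Ioo (0:ℝ) δ, deriv g x < 0 := by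
    intro x hx
    have hs := hsub hx
    simp only [mem_setOf_eq, slope, vsub_eq_sub, h1, sub_zero, smul_eq_mul] at hs
    by_contra hge
    push_neg at hge
    have : 0 ≤ x⁻¹ * deriv g x := mul_nonneg (inv_nonneg.mpr hx.1.le) hge
    linarith
  have anti : StrictAntiOn g (Icc 0 δ) := by
    apply strictAntiOn_of_deriv_neg (convex_Icc 0 δ) hg.continuous.continuousOn
    intro x hx
    rw [interior_Icc] at hx
    exact hderivneg x hx
  have := anti ⟨le_refl 0, hδ0.le⟩ ⟨hδ0.le, le_refl δ⟩ hδ0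
  have := hnn δ
  linarith

/-- Fixed-time computation: differentiate the u-equation in x at x = 0. -/
lemma step_lemma (ν : ℝ) (hν : 0 < ν) (g U P : ℝ → ℝ)
    (hg : ContDiff ℝ (⊤:ℕ∞) g) (hU : ContDiff ℝ (⊤:ℕ∞) U)
    (hg0 : g 0 = 0) (hg'0 : deriv g 0 = 0) (hgnn : ∀ y, 0 ≤ g y) (hU0 : U 0 = 0)
    (heq : ∀ x, P x = ν * deriv (fun y => g y * deriv U y) x - U x * deriv U x) :
    ∃ c, 0 ≤ c ∧ HasDerivAt P (c * deriv U 0 - (deriv U 0)^2) 0 := by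
  have hgd : Differentiable ℝ g := hg.differentiable one_le_inftyC
  have hUd : Differentiable ℝ U := hU.differentiable one_le_inftyC
  have hU' : ContDiff ℝ (⊤:ℕ∞) (deriv U) := (contDiff_infty_iff_deriv.mp hU).2
  have hU'' : ContDiff ℝ (⊤:ℕ∞) (deriv (deriv U)) := (contDiff_infty_iff_deriv.mp hU').2
  have hg' : ContDiff ℝ (⊤:ℕ∞) (deriv g) := (contDiff_infty_iff_deriv.mp hg).2
  have hg''0 : 0 ≤ deriv (deriv g) 0 := snd_deriv_nonneg g hg hg0 hg'0 hgnn
  have hprod : (fun x => deriv (fun y => g y * deriv U y) x)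
      = fun x => deriv g x * deriv U x + g x * deriv (deriv U) x :=
    funext fun x => deriv_fun_mul (hgd x) (hU'.differentiable one_le_inftyC x)
  refine ⟨ν * deriv (deriv g) 0, mul_nonneg hν.le hg''0, ?_⟩
  have h1 : HasDerivAt (fun x => deriv g x * deriv U x + g x * deriv (deriv U) x)
      (deriv (deriv g) 0 * deriv U 0) 0 := by
    have h := ((hg'.differentiable one_le_inftyC 0).hasDerivAt.mul
        (hU'.differentiable one_le_inftyC 0).hasDerivAt).add
      ((hgd 0).hasDerivAt.mul ((hU''.differentiable one_le_inftyC) 0).hasDerivAt)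
    refine h.congr_deriv ?_
    rw [hg'0, hg0]; ring
  have h2 : HasDerivAt (fun x => deriv (fun y => g y * deriv U y) x)
      (deriv (deriv g) 0 * deriv U 0) 0 := by rw [hprod]; exact h1
  have h3 : HasDerivAt (fun x => U x * deriv U x) ((deriv U 0)^2) 0 := by
    have h := (hUd 0).hasDerivAt.mul (hU'.differentiable one_le_inftyC 0).hasDerivAt
    refine h.congr_deriv ?_
    rw [hU0]; ring
  have h4 := (h2.const_mul ν).sub h3
  have hPe : P = fun x => ν * deriv (fun y => g y * deriv U y) x - U x * deriv U x :=
    funext heq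
  rw [hPe]
  refine h4.congr_deriv ?_
  ring

lemma ode_blowup (A : ℝ → ℝ) (T : ℝ) (hT : 0 < T)
    (hA : ∀ t ∈ Icc (0:ℝ) T, ∃ c, 0 ≤ c ∧ HasDerivAt A (c * A t - (A t)^2) t)
    (hA0 : A 0 < 0) :
    (∀ t ∈ Icc (0:ℝ) T, A t ≤ A 0 / (1 + A 0 * t)) ∧ T < 1 / |A 0| := by
  have cont : ContinuousOn A (Icc 0 T) := fun t ht =>
    ((hA t ht).choose_spec.2.continuousAt).continuousWithinAt
  -- A stays negative
  have neg : ∀ t ∈ Icc (0:ℝ) T, A t < 0 := by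
    by_contra hcon
    push_neg at hcon
    obtain ⟨t₁, ht₁, ht₁'⟩ := hcon
    have h01 : (0:ℝ) ≤ t₁ := ht₁.1
    have hIcc1T : Icc (0:ℝ) t₁ ⊆ Icc 0 T := Icc_subset_Icc le_rfl ht₁.2
    have hzero : (0:ℝ) ∈ A '' Icc 0 t₁ :=
      intermediate_value_Icc h01 (cont.mono hIcc1T) ⟨hA0.le, ht₁'⟩
    obtain ⟨s, hs, hAs⟩ := hzero
    set S : Set ℝ := {t | t ∈ Icc (0:ℝ) t₁ ∧ A t = 0} with hSdef
    have hSne : S.Nonempty := ⟨s, hs, hAs⟩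
    have hSbdd : BddBelow S := ⟨0, fun x hx => hx.1.1⟩
    have hSc : IsClosed S := by
      have : S = Icc (0:ℝ) t₁ ∩ A ⁻¹' {0} := by ext x; simp [hSdef, and_comm]
      rw [this]
      exact ContinuousOn.preimage_isClosed_of_isClosed (cont.mono hIcc1T)
        isClosed_Icc isClosed_singleton
    set t₀ := sInf S with ht₀def
    have ht₀S : t₀ ∈ S := hSc.csInf_mem hSne hSbdd
    have ht₀Icc : t₀ ∈ Icc (0:ℝ) t₁ := ht₀S.1
    have hAt₀ : A t₀ = 0 := ht₀S.2
    have ht₀pos : 0 < t₀ := by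
      rcases lt_or_eq_of_le ht₀Icc.1 with h | h
      · exact h
      · exfalso; rw [← h] at hAt₀; linarith
    have hlt : ∀ s ∈ Ico (0:ℝ) t₀, A s < 0 := by
      intro s hs'
      by_contra hge
      push_neg at hge
      have hsub : Icc (0:ℝ) s ⊆ Icc 0 t₁ := Icc_subset_Icc le_rfl (hs'.2.le.trans ht₀Icc.2)
      have : (0:ℝ) ∈ A '' Icc 0 s :=
        intermediate_value_Icc hs'.1 ((cont.mono hIcc1T).mono hsub) ⟨hA0.le, hge⟩
      obtain ⟨s', hs'', hAs'⟩ := this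
      have : t₀ ≤ s' := csInf_le hSbdd ⟨hsub hs'', hAs'⟩
      have : s' ≤ s := hs''.2
      linarith [hs'.2]
    have anti : StrictAntiOn A (Icc 0 t₀) := by
      apply strictAntiOn_of_deriv_neg (convex_Icc 0 t₀)
        (cont.mono (Icc_subset_Icc le_rfl (ht₀Icc.2.trans ht₁.2)))
      intro x hx
      rw [interior_Icc] at hx
      have hxIcc : x ∈ Icc (0:ℝ) T := ⟨hx.1.le, (hx.2.le.trans ht₀Icc.2).trans ht₁.2⟩
      obtain ⟨c, hc, hd⟩ := hA x hxIcc
      rw [hd.deriv]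
      have hAx : A x < 0 := hlt x ⟨hx.1.le, hx.2⟩
      nlinarith [mul_nonneg hc (neg_nonneg.mpr hAx.le)]
    have := anti (left_mem_Icc.mpr ht₀pos.le) (right_mem_Icc.mpr ht₀pos.le) ht₀pos
    linarith
  -- the reciprocal bound
  have hB : ∀ t ∈ Icc (0:ℝ) T, (A 0)⁻¹ + t ≤ (A t)⁻¹ := by
    have hmono : MonotoneOn (fun t => (A t)⁻¹ - t) (Icc 0 T) := by
      apply monotoneOn_of_deriv_nonneg (convex_Icc 0 T)
      · exact (cont.inv₀ fun t ht => (neg t ht).ne).sub continuousOn_id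
      · intro x hx
        rw [interior_Icc] at hx
        have hxIcc : x ∈ Icc (0:ℝ) T := Ioo_subset_Icc_self hx
        obtain ⟨c, hc, hd⟩ := hA x hxIcc
        exact ((hd.inv (neg x hxIcc).ne).sub (hasDerivAt_id x)).differentiableAt.differentiableWithinAt
      · intro x hx
        rw [interior_Icc] at hx
        have hxIcc : x ∈ Icc (0:ℝ) T := Ioo_subset_Icc_self hx
        obtain ⟨c, hc, hd⟩ := hA x hxIcc
        have hAx : A x < 0 := neg x hxIcc
        have hd' : HasDerivAt (fun t => (A t)⁻¹ - t) (-(c * A x - A x ^ 2) / A x ^ 2 - 1) x :=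
          (hd.inv hAx.ne).sub (hasDerivAt_id x)
        rw [hd'.deriv]
        have he : -(c * A x - A x ^ 2) / A x ^ 2 - 1 = -c / A x := by
          field_simp [hAx.ne]
          ring
        rw [he]
        exact div_nonneg_iff.mpr (Or.inr ⟨neg_nonpos.mpr hc, hAx.le⟩)
      done
    intro t ht
    have h := hmono (left_mem_Icc.mpr hT.le) ht ht.1
    simp only [sub_zero] at h
    linarith
  have key : ∀ t ∈ Icc (0:ℝ) T, 0 < 1 + A 0 * t ∧ A t ≤ A 0 / (1 + A 0 * t) := by
    intro t ht
    have hAt : A t < 0 := neg t ht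
    have hAtinv : (A t)⁻¹ < 0 := inv_lt_zero.mpr hAt
    have hb := hB t ht
    have hsum : (A 0)⁻¹ + t < 0 := lt_of_le_of_lt hb hAtinv
    have hpos : 0 < 1 + A 0 * t := by
      have h := mul_pos_of_neg_of_neg hA0 hsum
      have : A 0 * ((A 0)⁻¹ + t) = 1 + A 0 * t := by
        rw [mul_add, mul_inv_cancel₀ hA0.ne]
      linarith [this ▸ h]
    refine ⟨hpos, ?_⟩
    rw [le_div_iff₀ hpos]
    have h2 := mul_le_mul_of_nonneg_right hb (mul_pos_of_neg_of_neg hA0 hAt).le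
    have e1 : ((A 0)⁻¹ + t) * (A 0 * A t) = A t * (1 + A 0 * t) := by
      field_simp [hA0.ne]
    have e2 : (A t)⁻¹ * (A 0 * A t) = A 0 := by
      field_simp [hAt.ne]
    rw [e1, e2] at h2
    exact h2
  constructor
  · exact fun t ht => (key t ht).2
  · have hTIcc : T ∈ Icc (0:ℝ) T := right_mem_Icc.mpr hT.le
    have hpos := (key T hTIcc).1
    rw [abs_of_neg hA0]
    rw [lt_div_iff₀ (neg_pos.mpr hA0)]
    nlinarith

end Helpers

theorem blow_up_for_symmetric_data
    (ν α₁ α₂ α₃ α₄ T : ℝ) (hν : 0 < ν) (hα₁ : 0 < α₁) (hα₂ : 0 < α₂)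
    (hα₃ : 0 < α₃) (hα₄ : 0 < α₄) (hT : 0 < T)
    (u ω k : ℝ → ℝ → ℝ)
    (hsol : IsKolmogorovSolution ν α₁ α₂ α₃ α₄ T u ω k)
    (hk : ∀ t ∈ Icc (0 : ℝ) T, ∀ x : ℝ, 0 ≤ k t x)
    (hu_odd : ∀ t ∈ Icc (0 : ℝ) T, ∀ x : ℝ, u t (-x) = -u t x)
    (hω_even : ∀ t ∈ Icc (0 : ℝ) T, ∀ x : ℝ, ω t (-x) = ω t x)
    (hk_even : ∀ t ∈ Icc (0 : ℝ) T, ∀ x : ℝ, k t (-x) = k t x)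
    (hk0 : ∀ t ∈ Icc (0 : ℝ) T, k t 0 = 0)
    (hslope : pdx u 0 0 < 0) :
    (∀ t ∈ Icc (0 : ℝ) T, pdx u t 0 ≤ pdx u 0 0 / (1 + pdx u 0 0 * t)) ∧
      T < 1 / |pdx u 0 0| := by
  obtain ⟨hu_sm, hω_sm, hk_sm, -, -, -, hωpos, equ, -, -⟩ := hsol
  have hF : ContDiff ℝ (⊤:ℕ∞) (Function.uncurry u) := hu_sm
  have hFd : Differentiable ℝ (Function.uncurry u) := hF.differentiable one_le_inftyC
  have htop : ((⊤:ℕ∞) : WithTop ℕ∞) + 1 ≤ ((⊤:ℕ∞) : WithTop ℕ∞) := by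
    exact_mod_cast le_top
  have hΦ : ContDiff ℝ (⊤:ℕ∞) (fderiv ℝ (Function.uncurry u)) := hF.fderiv_right htop
  have hΦd : Differentiable ℝ (fderiv ℝ (Function.uncurry u)) :=
    hΦ.differentiable one_le_inftyC
  have hpdx : ∀ t x : ℝ, HasDerivAt (fun y => u t y)
      (fderiv ℝ (Function.uncurry u) (t,x) (0,1)) x := by
    intro t x
    have hline : HasDerivAt (fun y : ℝ => ((t,y) : ℝ×ℝ)) (((0:ℝ),(1:ℝ)) : ℝ×ℝ) x :=
      HasDerivAt.prodMk (hasDerivAt_const x t) (hasDerivAt_id x)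
    exact (hFd (t,x)).hasFDerivAt.comp_hasDerivAt x hline
  have hpdt : ∀ t x : ℝ, HasDerivAt (fun s => u s x)
      (fderiv ℝ (Function.uncurry u) (t,x) (1,0)) t := by
    intro t x
    have hline : HasDerivAt (fun s : ℝ => ((s,x) : ℝ×ℝ)) (((1:ℝ),(0:ℝ)) : ℝ×ℝ) t :=
      HasDerivAt.prodMk (hasDerivAt_id t) (hasDerivAt_const t x)
    exact (hFd (t,x)).hasFDerivAt.comp_hasDerivAt t hline
  set A : ℝ → ℝ := fun t => pdx u t 0 with hAdef
  have hA_eq : A = fun s => fderiv ℝ (Function.uncurry u) (s,0) (0,1) := by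
    funext s
    exact (hpdx s 0).deriv
  have hA' : ∀ t : ℝ, HasDerivAt A
      (fderiv ℝ (fderiv ℝ (Function.uncurry u)) (t,0) (1,0) (0,1)) t := by
    intro t
    rw [hA_eq]
    have hline : HasDerivAt (fun s : ℝ => ((s,0) : ℝ×ℝ)) (((1:ℝ),(0:ℝ)) : ℝ×ℝ) t :=
      HasDerivAt.prodMk (hasDerivAt_id t) (hasDerivAt_const t 0)
    have hc : HasDerivAt (fun s : ℝ => fderiv ℝ (Function.uncurry u) (s,0))
        (fderiv ℝ (fderiv ℝ (Function.uncurry u)) (t,0) (1,0)) t :=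
      (hΦd (t,0)).hasFDerivAt.comp_hasDerivAt t hline
    have h := hc.clm_apply (hasDerivAt_const t (((0:ℝ),(1:ℝ)) : ℝ×ℝ))
    simpa using h
  have hsymm : ∀ t : ℝ, fderiv ℝ (fderiv ℝ (Function.uncurry u)) (t,0) (1,0) (0,1)
      = fderiv ℝ (fderiv ℝ (Function.uncurry u)) (t,0) (0,1) (1,0) := fun t =>
    second_derivative_symmetric (fun y => (hFd y).hasFDerivAt) ((hΦd (t,0)).hasFDerivAt) _ _
  have hBder : ∀ t : ℝ, HasDerivAt (fun x => pdt u t x)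
      (fderiv ℝ (fderiv ℝ (Function.uncurry u)) (t,0) (0,1) (1,0)) 0 := by
    intro t
    have hfe : (fun x => pdt u t x)
        = fun x => fderiv ℝ (Function.uncurry u) (t,x) (1,0) :=
      funext fun x => (hpdt t x).deriv
    rw [hfe]
    have hline : HasDerivAt (fun y : ℝ => ((t,y) : ℝ×ℝ)) (((0:ℝ),(1:ℝ)) : ℝ×ℝ) 0 :=
      HasDerivAt.prodMk (hasDerivAt_const 0 t) (hasDerivAt_id 0)
    have hc : HasDerivAt (fun x : ℝ => fderiv ℝ (Function.uncurry u) (t,x))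
        (fderiv ℝ (fderiv ℝ (Function.uncurry u)) (t,0) (0,1)) 0 :=
      (hΦd (t,0)).hasFDerivAt.comp_hasDerivAt 0 hline
    have h := hc.clm_apply (hasDerivAt_const 0 (((1:ℝ),(0:ℝ)) : ℝ×ℝ))
    simpa using h
  have key : ∀ t ∈ Icc (0:ℝ) T, ∃ c, 0 ≤ c ∧ HasDerivAt A (c * A t - (A t)^2) t := by
    intro t ht
    have hUc : ContDiff ℝ (⊤:ℕ∞) (fun y => u t y) :=
      hF.comp (contDiff_const.prodMk contDiff_id)
    have hKc : ContDiff ℝ (⊤:ℕ∞) (fun y => k t y) :=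
      hk_sm.comp (contDiff_const.prodMk contDiff_id)
    have hWc : ContDiff ℝ (⊤:ℕ∞) (fun y => ω t y) :=
      hω_sm.comp (contDiff_const.prodMk contDiff_id)
    have hgc : ContDiff ℝ (⊤:ℕ∞) (fun y => k t y / ω t y) :=
      hKc.div hWc fun y => (hωpos t y).ne'
    have hU0 : u t 0 = 0 := by
      have h := hu_odd t ht 0
      rw [neg_zero] at h
      linarith
    have hg0 : (fun y => k t y / ω t y) 0 = 0 := by
      simp only
      rw [hk0 t ht, zero_div]
    have hge : ∀ y, (fun y => k t y / ω t y) (-y) = (fun y => k t y / ω t y) y := by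
      intro y
      simp only
      rw [hk_even t ht y, hω_even t ht y]
    have hg'0 : deriv (fun y => k t y / ω t y) 0 = 0 :=
      deriv_even_zero _ (hgc.differentiable one_le_inftyC) hge
    have hgnn : ∀ y, 0 ≤ (fun y => k t y / ω t y) y :=
      fun y => div_nonneg (hk t ht y) (hωpos t y).le
    have heq : ∀ x, pdt u t x
        = ν * deriv (fun y => k t y / ω t y * deriv (fun z => u t z) y) x
          - u t x * deriv (fun z => u t z) x := by
      intro x
      have h := equ t ht x
      simp only [pdx] at h
      linarith
    obtain ⟨c, hc, hP⟩ := step_lemma ν hν (fun y => k t y / ω t y) (fun z => u t z)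
      (fun x => pdt u t x) hgc hUc hg0 hg'0 hgnn hU0 heq
    have huniq : fderiv ℝ (fderiv ℝ (Function.uncurry u)) (t,0) (0,1) (1,0)
        = c * A t - (A t)^2 := by
      have h1 := (hBder t).deriv
      rw [← h1]
      exact hP.deriv
    refine ⟨c, hc, ?_⟩
    have h := hA' t
    rw [hsymm t, huniq] at h
    exact h
  have hA0 : A 0 < 0 := hslope
  exact ode_blowup A T hT key hA0
end
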